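/- arXiv:2001.04939 — 6 statements merged into one kernel-verified Lean document; each statement's English description precedes it below -/
import Mathlib

section
/- For all integers K and r with 2 ≤ r ≤ K−1 and every file size N divisible by (r−1)·P(K+1,K+1−r), there exists an r-balanced distributed database (C_i)_{i∈[K]} of the N-bit file on nodes [K] such that: (a) for every k ∈ [K] there exist a target r-balanced database on [K]\{k} and a rebalancing scheme for removal of node k whose total communication satisfies Σ_{i∈[K]\{k}} l_i = rN/((r−1)K), i.e., whose communication load is L_rem = 1/(r−1); and (b) there exist a target r-balanced database on [K+1] and a rebalancing scheme for node addition whose total communication satisfies Σ_{i∈[K]} l_i = rN/(K+1), i.e., whose communication load is L_add = 1. Consequently the rebalancing load max_{k∈[K]} L_rem(k) + L_add = 1/(r−1) + 1 is achievable. -/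
open Finset

/-- A family `C` of storage sets (subsets of the bit-indices `Fin N`) indexed by the
nodes in `S ⊆ Fin K` is an `r`-balanced distributed database of an `N`-bit file on `S`:
the union of the stored sets is all of `[N]`, every bit-index is stored in exactly `r`
of the nodes of `S`, and all nodes of `S` store equally many indices. -/
def isBalancedOn (N K r : ℕ) (S : Finset (Fin K)) (C : Fin K → Finset (Fin N)) : Prop :=
  (∀ n : Fin N, ∃ i ∈ S, n ∈ C i) ∧
  (∀ n : Fin N, (S.filter (fun i => n ∈ C i)).card = r) ∧
  (∀ i ∈ S, ∀ j ∈ S, (C i).card = (C j).card)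

/-- A rebalancing scheme for the removal of node `k` from the database `C` on nodes
`Fin K`, with target database `Ct` on the surviving nodes `Fin K \ {k}`.
Each surviving node `i ≠ k` broadcasts a codeword of `l i` bits computed from the file,
where the codeword depends only on the bits stored at node `i` (`enc_local`); each
surviving node `i ≠ k` then recovers the bits of its target storage `Ct i` from its own
stored bits (the file masked to `C i`) and the codewords of the other surviving nodes. -/
structure RemovalScheme (N K : ℕ) (C : Fin K → Finset (Fin N)) (k : Fin K)
    (Ct : Fin K → Finset (Fin N)) where
  l : Fin K → ℕ
  enc : (i : Fin K) → (Fin N → Bool) → Fin (l i) → Bool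
  enc_local : ∀ i : Fin K, i ≠ k → ∀ W W' : Fin N → Bool,
    (∀ n ∈ C i, W n = W' n) → enc i W = enc i W'
  dec : (i : Fin K) → (Fin N → Bool) →
    ((j : {j : Fin K // j ≠ i ∧ j ≠ k}) → Fin (l j.1) → Bool) → Fin N → Bool
  dec_correct : ∀ i : Fin K, i ≠ k → ∀ W : Fin N → Bool, ∀ n ∈ Ct i,
    dec i (fun m => if m ∈ C i then W m else false) (fun j => enc j.1 W) n = W n

/-- A rebalancing scheme for the addition of a new empty node to the database `C` on
nodes `Fin K`, with target database `C'` on the nodes `Fin (K+1)` (old node `i`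
corresponds to `i.castSucc`, and the new node is `Fin.last K`).
Each old node `i` broadcasts a codeword of `l i` bits depending only on its stored bits;
each old node recovers its target storage from its stored bits and the other `K-1`
codewords, and the new node recovers its target storage from all `K` codewords. -/
structure AdditionScheme (N K : ℕ) (C : Fin K → Finset (Fin N))
    (C' : Fin (K + 1) → Finset (Fin N)) where
  l : Fin K → ℕ
  enc : (i : Fin K) → (Fin N → Bool) → Fin (l i) → Bool
  enc_local : ∀ i : Fin K, ∀ W W' : Fin N → Bool,
    (∀ n ∈ C i, W n = W' n) → enc i W = enc i W'
  dec : (i : Fin K) → (Fin N → Bool) →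
    ((j : {j : Fin K // j ≠ i}) → Fin (l j.1) → Bool) → Fin N → Bool
  dec_correct : ∀ i : Fin K, ∀ W : Fin N → Bool, ∀ n ∈ C' i.castSucc,
    dec i (fun m => if m ∈ C i then W m else false) (fun j => enc j.1 W) n = W n
  decNew : ((j : Fin K) → Fin (l j) → Bool) → Fin N → Bool
  decNew_correct : ∀ W : Fin N → Bool, ∀ n ∈ C' (Fin.last K),
    decNew (fun j => enc j W) n = W n

open Finset

namespace Rebal

variable {α β : Type*}

/-- transport a filter-card along an equiv -/
lemma card_filter_comp_equiv [Fintype α] [Fintype β] (e : α ≃ β) (p : β → Prop)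
    [DecidablePred p] :
    (univ.filter (fun a => p (e a))).card = (univ.filter p).card := by
  apply Finset.card_bij (fun a _ => e a)
  · intro a ha; simp only [mem_filter, mem_univ, true_and] at ha ⊢; exact ha
  · intro a _ b _ h; exact e.injective h
  · intro b hb; exact ⟨e.symm b, by simp only [mem_filter, mem_univ, true_and,
      Equiv.apply_symm_apply] at hb ⊢; exact hb, by simp⟩

lemma card_filter_subtype [Fintype α] (s : Finset α) (P : {x // x ∈ s} → Prop)
    [DecidablePred P] (p : α → Prop) [DecidablePred p] (hP : ∀ x, P x ↔ p x.1) :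
    (univ.filter P).card = (s.filter p).card := by
  apply Finset.card_bij (fun x _ => x.1)
  · intro x hx; simp only [mem_filter, mem_univ, true_and] at hx
    exact mem_filter.mpr ⟨x.2, (hP x).mp hx⟩
  · intro a _ b _ h; exact Subtype.ext h
  · intro b hb; rw [mem_filter] at hb
    exact ⟨⟨b, hb.1⟩, by simp [(hP ⟨b, hb.1⟩).mpr hb.2], rfl⟩

lemma card_filter_prod_dep [Fintype α] [Fintype β] (p : α → Prop) (q : α → β → Prop)
    [DecidablePred p] [∀ a, DecidablePred (q a)] :
    (univ.filter (fun x : α × β => p x.1 ∧ q x.1 x.2)).card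
      = ∑ a ∈ univ.filter p, (univ.filter (q a)).card := by
  rw [Finset.card_filter, Fintype.sum_prod_type, Finset.sum_filter]
  refine Finset.sum_congr rfl (fun a _ => ?_)
  by_cases hp : p a
  · simp only [hp, if_true, true_and, Finset.card_filter]
  · simp [hp]

lemma card_filter_fst [Fintype α] [Fintype β] (p : α → Prop) [DecidablePred p] :
    (univ.filter (fun x : α × β => p x.1)).card
      = (univ.filter p).card * Fintype.card β := by
  rw [Finset.card_filter, Fintype.sum_prod_type]
  have h1 : ∀ a : α, (∑ _b : β, if p a then 1 else 0) = if p a then Fintype.card β else 0 := by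
    intro a; by_cases hp : p a
    · rw [if_pos hp, Finset.sum_const, smul_eq_mul, mul_one, card_univ]
      exact (if_pos hp).symm
    · rw [if_neg hp, Finset.sum_const, smul_eq_mul, mul_zero]
      exact (if_neg hp).symm
  rw [Finset.sum_congr rfl (fun a _ => h1 a), ← Finset.sum_filter, Finset.sum_const,
    smul_eq_mul]

lemma card_filter_snd [Fintype α] [Fintype β] (q : β → Prop) [DecidablePred q] :
    (univ.filter (fun x : α × β => q x.2)).card
      = Fintype.card α * (univ.filter q).card := by
  rw [Finset.card_filter, Fintype.sum_prod_type]
  have h1 : ∀ _a : α, (∑ b : β, if q b then 1 else 0) = (univ.filter q).card :=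
    fun _ => (Finset.card_filter _ _).symm
  rw [Finset.sum_congr rfl (fun a _ => h1 a), Finset.sum_const, smul_eq_mul, card_univ]

lemma card_filter_perm_image [Fintype α] [DecidableEq α] (π : Equiv.Perm α) (t : ℕ)
    (p : Finset α → Prop) [DecidablePred p] :
    ((powersetCard t (univ : Finset α)).filter p).card
      = ((powersetCard t (univ : Finset α)).filter (fun B => p (B.image π))).card := by
  apply Finset.card_bij (fun B _ => B.image π.symm)
  · intro B hB
    rw [mem_filter] at hB ⊢
    constructor
    · rw [mem_powersetCard] at hB ⊢
      refine ⟨subset_univ _, ?_⟩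
      rw [Finset.card_image_of_injective _ π.symm.injective]; exact hB.1.2
    · rw [Finset.image_image]
      have : (⇑π ∘ ⇑π.symm) = id := by funext x; simp
      rw [this, Finset.image_id]; exact hB.2
  · intro a _ b _ h
    have := congrArg (fun s => Finset.image π s) h
    simpa [Finset.image_image, Function.comp, Finset.image_id] using this
  · intro B hB
    rw [mem_filter] at hB
    refine ⟨B.image π, ?_, ?_⟩
    · rw [mem_filter, mem_powersetCard]
      exact ⟨⟨subset_univ _, by rw [Finset.card_image_of_injective _ π.injective,
        (mem_powersetCard.mp hB.1).2]⟩, hB.2⟩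
    · rw [Finset.image_image]
      have : (⇑π.symm ∘ ⇑π) = id := by funext x; simp
      rw [this, Finset.image_id]

lemma mem_image_perm [DecidableEq α] {B : Finset α} (π : Equiv.Perm α) (a : α) :
    a ∈ B.image π ↔ π.symm a ∈ B := by
  simp only [Finset.mem_image]
  constructor
  · rintro ⟨b, hb, rfl⟩; simpa using hb
  · intro h; exact ⟨π.symm a, h, by simp⟩

lemma card_filter_swap_pred [Fintype α] [DecidableEq α] (t : ℕ) (i j : α)
    (p q : Finset α → Prop) [DecidablePred p] [DecidablePred q]
    (h : ∀ B, p (B.image (Equiv.swap i j)) ↔ q B) :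
    ((powersetCard t (univ : Finset α)).filter p).card
      = ((powersetCard t (univ : Finset α)).filter q).card := by
  rw [card_filter_perm_image (Equiv.swap i j) t p]
  congr 1
  apply Finset.filter_congr
  intro B _
  simpa using h B

/-- all fibers `#{B ∈ r-subsets | i ∈ B}` have equal cardinality -/
lemma card_mem_powersetCard_eq [Fintype α] [DecidableEq α] (t : ℕ) (i j : α) :
    ((powersetCard t (univ : Finset α)).filter (fun B => i ∈ B)).card
      = ((powersetCard t (univ : Finset α)).filter (fun B => j ∈ B)).card := by
  refine card_filter_swap_pred t i j _ _ (fun B => ?_)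
  rw [mem_image_perm]
  simp

lemma sum_card_mem_powersetCard [Fintype α] [DecidableEq α] (t : ℕ) :
    ∑ i : α, ((powersetCard t (univ : Finset α)).filter (fun B => i ∈ B)).card
      = (powersetCard t (univ : Finset α)).card * t := by
  have hc : ∀ B ∈ powersetCard t (univ : Finset α), B.card = t := by
    intro B hB; exact (mem_powersetCard.mp hB).2
  calc ∑ i : α, ((powersetCard t (univ : Finset α)).filter (fun B => i ∈ B)).card
      = ∑ i : α, ∑ B ∈ powersetCard t (univ : Finset α), if i ∈ B then 1 else 0 := by
        refine Finset.sum_congr rfl (fun i _ => ?_); rw [Finset.card_filter]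
    _ = ∑ B ∈ powersetCard t (univ : Finset α), ∑ i : α, if i ∈ B then 1 else 0 := by
        rw [Finset.sum_comm]
    _ = ∑ B ∈ powersetCard t (univ : Finset α), B.card := by
        refine Finset.sum_congr rfl (fun B _ => ?_)
        rw [← Finset.card_filter, Finset.filter_univ_mem]
    _ = (powersetCard t (univ : Finset α)).card * t := by
        rw [Finset.sum_congr rfl hc, Finset.sum_const, smul_eq_mul]

/-- uniqueness of order-iso preimages: the filter has exactly one element -/
lemma card_filter_orderIso_eq [LinearOrder α] {s : Finset α} {t : ℕ}
    (h : s.card = t) {i : α} (hi : i ∈ s) :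
    (univ.filter (fun u : Fin t => ((s.orderIsoOfFin h u : α)) = i)).card = 1 := by
  rw [Finset.card_eq_one]
  refine ⟨(s.orderIsoOfFin h).symm ⟨i, hi⟩, ?_⟩
  ext u
  simp only [mem_filter, mem_univ, true_and, Finset.mem_singleton]
  constructor
  · intro hu
    have : s.orderIsoOfFin h u = ⟨i, hi⟩ := Subtype.ext hu
    rw [← this, OrderIso.symm_apply_apply]
  · rintro rfl
    simp

def toZ (b : Bool) : ZMod 2 := if b then 1 else 0
def ofZ (x : ZMod 2) : Bool := decide (x = 1)

lemma toZ_ofZ (x : ZMod 2) : toZ (ofZ x) = x := by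
  fin_cases x <;> rfl

lemma ofZ_toZ (b : Bool) : ofZ (toZ b) = b := by
  cases b <;> rfl

lemma zmod2_cancel (a b : ZMod 2) : a + b + b = a := by
  fin_cases a <;> fin_cases b <;> rfl

end Rebal


open Finset

namespace Rebal

variable {K r p0 N : ℕ}

abbrev BSet (K r : ℕ) := {B : Finset (Fin K) // B ∈ Finset.powersetCard r Finset.univ}

abbrev MasterT (K r p0 : ℕ) := BSet K r × Fin (K + 1) × Fin (K - r) × Fin (r - 1) × Fin p0

lemma BSet.cardB (B : BSet K r) : B.1.card = r := (Finset.mem_powersetCard.mp B.2).2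

lemma BSet.card_compl (B : BSet K r) : B.1ᶜ.card = K - r := by
  rw [Finset.card_compl, Fintype.card_fin, B.cardB]

/-- the block (host set) of a bit -/
def hB (e : Fin N ≃ MasterT K r p0) (n : Fin N) : Finset (Fin K) := (e n).1.1

def dC (e : Fin N ≃ MasterT K r p0) (n : Fin N) : Fin (K + 1) := (e n).2.1
def uC (e : Fin N ≃ MasterT K r p0) (n : Fin N) : Fin (K - r) := (e n).2.2.1
def vC (e : Fin N ≃ MasterT K r p0) (n : Fin N) : Fin (r - 1) := (e n).2.2.2.1
def wC (e : Fin N ≃ MasterT K r p0) (n : Fin N) : Fin p0 := (e n).2.2.2.2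

/-- the initial database -/
def Cdb (e : Fin N ≃ MasterT K r p0) (i : Fin K) : Finset (Fin N) :=
  univ.filter (fun n => i ∈ hB e n)

lemma mem_Cdb (e : Fin N ≃ MasterT K r p0) (i : Fin K) (n : Fin N) :
    n ∈ Cdb e i ↔ i ∈ hB e n := by simp [Cdb]

def hostIso (B : BSet K r) : Fin (K - r) ≃o {x : Fin K // x ∈ B.1ᶜ} :=
  (B.1ᶜ).orderIsoOfFin B.card_compl

/-- the new host for the removal rebalancing (meaningful when the removed node is a host) -/
def newhost (e : Fin N ≃ MasterT K r p0) (n : Fin N) : Fin K :=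
  (hostIso (e n).1 (uC e n) : Fin K)

lemma newhost_not_mem (e : Fin N ≃ MasterT K r p0) (n : Fin N) :
    newhost e n ∉ hB e n := by
  have := (hostIso (e n).1 (uC e n)).2
  rw [Finset.mem_compl] at this
  exact this

/-- the `v`-th element of `B.erase k` (junk value `k` if out of range) -/
def transSel (B : Finset (Fin K)) (k : Fin K) (v : ℕ) : Fin K :=
  ((B.erase k).sort (· ≤ ·)).getD v k

lemma transSel_mem {B : Finset (Fin K)} {k : Fin K} {v : ℕ}
    (hv : v < (B.erase k).card) : transSel B k v ∈ B.erase k := by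
  rw [transSel, List.getD_eq_getElem _ _ (by rwa [Finset.length_sort])]
  rw [← Finset.mem_sort (α := Fin K) (· ≤ ·)]
  exact List.getElem_mem _

lemma transSel_inj {B : Finset (Fin K)} {k : Fin K} {v v' : ℕ}
    (hv : v < (B.erase k).card) (hv' : v' < (B.erase k).card)
    (h : transSel B k v = transSel B k v') : v = v' := by
  rw [transSel, transSel, List.getD_eq_getElem _ _ (by rwa [Finset.length_sort]),
    List.getD_eq_getElem _ _ (by rwa [Finset.length_sort])] at h
  exact ((Finset.sort_nodup _ _).getElem_inj_iff).mp h

/-- index of an element of `B.erase k` -/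
def transIdx (B : Finset (Fin K)) (k x : Fin K) : ℕ :=
  ((B.erase k).sort (· ≤ ·)).idxOf x

lemma transIdx_lt {B : Finset (Fin K)} {k x : Fin K} (hx : x ∈ B.erase k) :
    transIdx B k x < (B.erase k).card := by
  rw [transIdx, ← Finset.length_sort (· ≤ ·)]
  exact List.idxOf_lt_length_iff.mpr ((Finset.mem_sort (· ≤ ·)).mpr hx)

lemma transSel_transIdx {B : Finset (Fin K)} {k x : Fin K} (hx : x ∈ B.erase k) :
    transSel B k (transIdx B k x) = x := by
  rw [transSel, transIdx, List.getD_eq_getElem _ _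
    (List.idxOf_lt_length_iff.mpr ((Finset.mem_sort (· ≤ ·)).mpr hx))]
  exact List.getElem_idxOf _

def transmitter (e : Fin N ≃ MasterT K r p0) (k : Fin K) (n : Fin N) : Fin K :=
  transSel (hB e n) k (vC e n)

lemma erase_card_eq (e : Fin N ≃ MasterT K r p0) (k : Fin K) (n : Fin N)
    (hk : k ∈ hB e n) : ((hB e n).erase k).card = r - 1 := by
  have hBc : (hB e n).card = r := (e n).1.cardB
  rw [Finset.card_erase_of_mem hk, hBc]

lemma transmitter_mem (e : Fin N ≃ MasterT K r p0) (k : Fin K) (n : Fin N)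
    (hk : k ∈ hB e n) : transmitter e k n ∈ (hB e n).erase k := by
  apply transSel_mem
  rw [erase_card_eq e k n hk]
  exact (vC e n).2

/-- target database for the removal of node `k` -/
def CtR (e : Fin N ≃ MasterT K r p0) (k i : Fin K) : Finset (Fin N) :=
  univ.filter (fun n => i ≠ k ∧ (i ∈ hB e n ∨ (k ∈ hB e n ∧ newhost e n = i)))

lemma mem_CtR (e : Fin N ≃ MasterT K r p0) (k i : Fin K) (n : Fin N) :
    n ∈ CtR e k i ↔ i ≠ k ∧ (i ∈ hB e n ∨ (k ∈ hB e n ∧ newhost e n = i)) := by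
  simp [CtR]

/-- bit index of the piece of the block `insert k (Z.erase j)` destined to the new host
`j`, assigned to the transmitter `i`, at sub-position `(d, w)` -/
def pidx (e : Fin N ≃ MasterT K r p0) (k : Fin K) (Z : Finset (Fin K))
    (hZ : Z ∈ powersetCard r (univ.erase k)) (j : Fin K) (hj : j ∈ Z)
    (i : Fin K) (hi : i ∈ Z) (hij : i ≠ j) (d : Fin (K + 1)) (w : Fin p0) : Fin N :=
  have hZsub := (Finset.mem_powersetCard.mp hZ).1
  have hZcard := (Finset.mem_powersetCard.mp hZ).2
  have hkZ : k ∉ Z := fun hk => (Finset.mem_erase.mp (hZsub hk)).1 rfl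
  have hik : i ≠ k := fun h => hkZ (h ▸ hi)
  have hjk : j ≠ k := fun h => hkZ (h ▸ hj)
  have h1r : 1 ≤ r := hZcard ▸ Finset.card_pos.mpr ⟨j, hj⟩
  have hBcard : (insert k (Z.erase j)).card = r := by
    rw [Finset.card_insert_of_notMem (fun hh => hkZ (Finset.mem_of_mem_erase hh)),
      Finset.card_erase_of_mem hj, hZcard]
    omega
  have hBmem : insert k (Z.erase j) ∈ powersetCard r (univ : Finset (Fin K)) :=
    Finset.mem_powersetCard.mpr ⟨Finset.subset_univ _, hBcard⟩
  have hjB : j ∈ (insert k (Z.erase j))ᶜ := by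
    rw [Finset.mem_compl, Finset.mem_insert]
    push_neg
    exact ⟨hjk, Finset.notMem_erase j Z⟩
  have hiB : i ∈ (insert k (Z.erase j)).erase k :=
    Finset.mem_erase.mpr ⟨hik, Finset.mem_insert_of_mem (Finset.mem_erase.mpr ⟨hij, hi⟩)⟩
  have herc : ((insert k (Z.erase j)).erase k).card = r - 1 := by
    rw [Finset.card_erase_of_mem (Finset.mem_insert_self k _), hBcard]
  e.symm ⟨⟨insert k (Z.erase j), hBmem⟩, d,
    (hostIso ⟨insert k (Z.erase j), hBmem⟩).symm ⟨j, hjB⟩,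
    ⟨transIdx (insert k (Z.erase j)) k i, herc ▸ transIdx_lt hiB⟩, w⟩

section symmLemmas

variable (e : Fin N ≃ MasterT K r p0) (k : Fin K) (x : MasterT K r p0)

lemma hB_symm : hB e (e.symm x) = x.1.1 := by
  unfold hB; rw [Equiv.apply_symm_apply]

lemma dC_symm : dC e (e.symm x) = x.2.1 := by
  unfold dC; rw [Equiv.apply_symm_apply]

lemma uC_symm : uC e (e.symm x) = x.2.2.1 := by
  unfold uC; rw [Equiv.apply_symm_apply]

lemma vC_symm : vC e (e.symm x) = x.2.2.2.1 := by
  unfold vC; rw [Equiv.apply_symm_apply]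

lemma wC_symm : wC e (e.symm x) = x.2.2.2.2 := by
  unfold wC; rw [Equiv.apply_symm_apply]

lemma newhost_symm : newhost e (e.symm x) = (hostIso x.1 x.2.2.1 : Fin K) := by
  unfold newhost uC; rw [Equiv.apply_symm_apply]

lemma transmitter_symm :
    transmitter e k (e.symm x) = transSel x.1.1 k x.2.2.2.1 := by
  unfold transmitter hB vC
  rw [Equiv.apply_symm_apply]

end symmLemmas

section pidxLemmas

variable (e : Fin N ≃ MasterT K r p0) (k : Fin K) {Z : Finset (Fin K)}
  (hZ : Z ∈ powersetCard r (univ.erase k)) {j : Fin K} (hj : j ∈ Z)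
  {i : Fin K} (hi : i ∈ Z) (hij : i ≠ j) (d : Fin (K + 1)) (w : Fin p0)

lemma hB_pidx : hB e (pidx e k Z hZ j hj i hi hij d w) = insert k (Z.erase j) := by
  unfold pidx; rw [hB_symm]

lemma dC_pidx : dC e (pidx e k Z hZ j hj i hi hij d w) = d := by
  unfold pidx; rw [dC_symm]

lemma wC_pidx : wC e (pidx e k Z hZ j hj i hi hij d w) = w := by
  unfold pidx; rw [wC_symm]

lemma newhost_pidx : newhost e (pidx e k Z hZ j hj i hi hij d w) = j := by
  unfold pidx; rw [newhost_symm]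
  exact congrArg Subtype.val (OrderIso.apply_symm_apply _ _)

lemma transmitter_pidx : transmitter e k (pidx e k Z hZ j hj i hi hij d w) = i := by
  unfold pidx
  rw [transmitter_symm]
  apply transSel_transIdx
  have hkZ : k ∉ Z := fun hk => (Finset.mem_erase.mp ((Finset.mem_powersetCard.mp hZ).1 hk)).1 rfl
  have hik : i ≠ k := fun h => hkZ (h ▸ hi)
  exact Finset.mem_erase.mpr ⟨hik, Finset.mem_insert_of_mem (Finset.mem_erase.mpr ⟨hij, hi⟩)⟩

end pidxLemmas

/-- the (coded) bit contributed by transmitter `i` for target `j` -/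
def pbit (e : Fin N ≃ MasterT K r p0) (k : Fin K) (W : Fin N → Bool) (Z : Finset (Fin K))
    (d : Fin (K + 1)) (w : Fin p0) (i j : Fin K) : ZMod 2 :=
  if h : Z ∈ powersetCard r (univ.erase k) ∧ j ∈ Z ∧ i ∈ Z ∧ i ≠ j then
    toZ (W (pidx e k Z h.1 j h.2.1 i h.2.2.1 h.2.2.2 d w))
  else 0

/-- transmissions of node `i` upon removal of node `k` -/
def ZS (r : ℕ) (k i : Fin K) : Finset (Finset (Fin K)) :=
  (powersetCard r ((univ : Finset (Fin K)).erase k)).filter (fun Z => i ∈ Z)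

def TiR (r p0 : ℕ) (k i : Fin K) : Finset (Finset (Fin K) × (Fin (K + 1) × Fin p0)) :=
  ZS r k i ×ˢ univ

def lR (r p0 : ℕ) (k i : Fin K) : ℕ := (TiR r p0 k i).card

noncomputable def encR (e : Fin N ≃ MasterT K r p0) (k i : Fin K) (W : Fin N → Bool)
    (a : Fin (lR r p0 k i)) : Bool :=
  ofZ (∑ j ∈ (((TiR r p0 k i).equivFin.symm a).1.1.erase i),
    pbit e k W ((TiR r p0 k i).equivFin.symm a).1.1
      ((TiR r p0 k i).equivFin.symm a).1.2.1
      ((TiR r p0 k i).equivFin.symm a).1.2.2 i j)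

section Addition

variable {K r p0 N : ℕ}

/-- the mover selector: for `d < r`, the `d`-th element of `B` -/
def jsel (hr0 : 0 < r) (B : BSet K r) (d : Fin (K + 1)) : Fin K :=
  if h : (d : ℕ) < r then (B.1.orderIsoOfFin B.cardB ⟨d, h⟩ : Fin K)
  else (B.1.orderIsoOfFin B.cardB ⟨0, hr0⟩ : Fin K)

lemma jsel_mem (hr0 : 0 < r) (B : BSet K r) (d : Fin (K + 1)) : jsel hr0 B d ∈ B.1 := by
  unfold jsel
  split <;> exact (B.1.orderIsoOfFin B.cardB _).2

def sender (e : Fin N ≃ MasterT K r p0) (hr0 : 0 < r) (n : Fin N) : Fin K :=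
  jsel hr0 (e n).1 (dC e n)

lemma sender_mem (e : Fin N ≃ MasterT K r p0) (hr0 : 0 < r) (n : Fin N) :
    sender e hr0 n ∈ hB e n := jsel_mem hr0 (e n).1 (dC e n)

/-- the target storage sets after node addition, as subsets of `Fin (K+1)` -/
def SsetA (e : Fin N ≃ MasterT K r p0) (hr0 : 0 < r) (n : Fin N) : Finset (Fin (K + 1)) :=
  if (dC e n : ℕ) < r then
    insert (Fin.last K) (((hB e n).erase (sender e hr0 n)).image Fin.castSucc)
  else (hB e n).image Fin.castSucc

/-- the target database after node addition -/
def Cadd (e : Fin N ≃ MasterT K r p0) (hr0 : 0 < r) (i : Fin (K + 1)) : Finset (Fin N) :=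
  univ.filter (fun n => i ∈ SsetA e hr0 n)

lemma mem_Cadd (e : Fin N ≃ MasterT K r p0) (hr0 : 0 < r) (i : Fin (K + 1)) (n : Fin N) :
    n ∈ Cadd e hr0 i ↔ i ∈ SsetA e hr0 n := by simp [Cadd]

def sendSet (e : Fin N ≃ MasterT K r p0) (hr0 : 0 < r) (i : Fin K) : Finset (Fin N) :=
  univ.filter (fun n => (dC e n : ℕ) < r ∧ sender e hr0 n = i)

def lA (e : Fin N ≃ MasterT K r p0) (hr0 : 0 < r) (i : Fin K) : ℕ := (sendSet e hr0 i).card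

noncomputable def encA (e : Fin N ≃ MasterT K r p0) (hr0 : 0 < r) (i : Fin K)
    (W : Fin N → Bool) (a : Fin (lA e hr0 i)) : Bool :=
  W ((sendSet e hr0 i).equivFin.symm a).1

noncomputable def decNewA (e : Fin N ≃ MasterT K r p0) (hr0 : 0 < r)
    (code : (j : Fin K) → Fin (lA e hr0 j) → Bool) (n : Fin N) : Bool :=
  if h : n ∈ sendSet e hr0 (sender e hr0 n) then
    code (sender e hr0 n) ((sendSet e hr0 (sender e hr0 n)).equivFin ⟨n, h⟩)
  else false

lemma castSucc_mem_SsetA (e : Fin N ≃ MasterT K r p0) (hr0 : 0 < r) (n : Fin N) (i : Fin K) :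
    i.castSucc ∈ SsetA e hr0 n ↔
      (if (dC e n : ℕ) < r then i ∈ (hB e n).erase (sender e hr0 n) else i ∈ hB e n) := by
  unfold SsetA
  split
  · rw [Finset.mem_insert]
    constructor
    · rintro (h | h)
      · exact absurd h (Fin.castSucc_lt_last i).ne
      · obtain ⟨x, hx, hxx⟩ := Finset.mem_image.mp h
        rwa [← Fin.castSucc_inj.mp hxx]
    · intro h
      exact Or.inr (Finset.mem_image.mpr ⟨i, h, rfl⟩)
  · constructor
    · intro h
      obtain ⟨x, hx, hxx⟩ := Finset.mem_image.mp h
      rwa [← Fin.castSucc_inj.mp hxx]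
    · intro h
      exact Finset.mem_image.mpr ⟨i, h, rfl⟩

lemma last_mem_SsetA (e : Fin N ≃ MasterT K r p0) (hr0 : 0 < r) (n : Fin N) :
    Fin.last K ∈ SsetA e hr0 n ↔ (dC e n : ℕ) < r := by
  unfold SsetA
  split
  · next h => simp [h]
  · next h =>
    simp only [Finset.mem_image, iff_false, h]
    rintro ⟨x, hx, hxx⟩
    exact (Fin.castSucc_lt_last x).ne hxx

end Addition

end Rebal


open Finset

namespace Rebal

variable {K r p0 N : ℕ}

/-- decoder for the removal scheme -/
noncomputable def dR (e : Fin N ≃ MasterT K r p0) (k i : Fin K) (masked : Fin N → Bool)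
    (code : (j : {j : Fin K // j ≠ i ∧ j ≠ k}) → Fin (lR r p0 k j.1) → Bool)
    (n : Fin N) : Bool :=
  if hiB : i ∈ hB e n then masked n
  else if h : k ∈ hB e n ∧ newhost e n = i ∧ i ≠ k then
    ofZ (toZ (code ⟨transmitter e k n,
            fun hh => hiB (hh ▸ Finset.mem_of_mem_erase (transmitter_mem e k n h.1)),
            (Finset.mem_erase.mp (transmitter_mem e k n h.1)).1⟩
          ((TiR r p0 k (transmitter e k n)).equivFin
            ⟨(insert i ((hB e n).erase k), (dC e n, wC e n)), by
              rw [TiR, Finset.mem_product]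
              refine ⟨Finset.mem_filter.mpr ⟨?_, Finset.mem_insert_of_mem
                (transmitter_mem e k n h.1)⟩, Finset.mem_univ _⟩
              rw [Finset.mem_powersetCard]
              have hBc : (hB e n).card = r := (e n).1.cardB
              constructor
              · intro x hx
                rcases Finset.mem_insert.mp hx with rfl | hx
                · exact Finset.mem_erase.mpr ⟨h.2.2, Finset.mem_univ _⟩
                · exact Finset.mem_erase.mpr ⟨(Finset.mem_erase.mp hx).1, Finset.mem_univ _⟩
              · rw [Finset.card_insert_of_notMem (fun hh => hiB (Finset.mem_of_mem_erase hh)),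
                  Finset.card_erase_of_mem h.1, hBc]
                have h1r : 1 ≤ r := hBc ▸ Finset.card_pos.mpr ⟨k, h.1⟩
                omega⟩))
        + ∑ j ∈ ((insert i ((hB e n).erase k)).erase (transmitter e k n)).erase i,
            pbit e k masked (insert i ((hB e n).erase k)) (dC e n) (wC e n)
              (transmitter e k n) j)
  else false

/-- the encoders only depend on locally stored bits -/
lemma encR_local (e : Fin N ≃ MasterT K r p0) (k i : Fin K) (W W' : Fin N → Bool)
    (hWW : ∀ n ∈ Cdb e i, W n = W' n) : encR e k i W = encR e k i W' := by
  funext a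
  unfold encR
  congr 1
  refine Finset.sum_congr rfl (fun j hj => ?_)
  unfold pbit
  split
  · next h =>
    congr 1
    apply hWW
    rw [mem_Cdb, hB_pidx]
    exact Finset.mem_insert_of_mem (Finset.mem_erase.mpr ⟨h.2.2.2, h.2.2.1⟩)
  · rfl

section DecCorrect

variable {K r p0 N : ℕ}

lemma master_ext (e : Fin N ≃ MasterT K r p0) (m n : Fin N)
    (h1 : hB e m = hB e n) (h2 : dC e m = dC e n) (h3 : uC e m = uC e n)
    (h4 : vC e m = vC e n) (h5 : wC e m = wC e n) : m = n := by
  apply e.injective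
  have hB1 : (e m).1 = (e n).1 := Subtype.ext h1
  exact Prod.ext hB1 (Prod.ext h2 (Prod.ext h3 (Prod.ext h4 h5)))

lemma uC_eq (e : Fin N ≃ MasterT K r p0) {m n : Fin N}
    (h1 : hB e m = hB e n) (h3 : newhost e m = newhost e n) : uC e m = uC e n := by
  have hB1 : (e m).1 = (e n).1 := Subtype.ext h1
  unfold newhost at h3
  rw [← hB1] at h3
  exact (hostIso (e m).1).injective (Subtype.coe_injective h3)

lemma vC_eq (e : Fin N ≃ MasterT K r p0) (k : Fin K) {m n : Fin N}
    (h1 : hB e m = hB e n) (hk : k ∈ hB e m)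
    (ht : transmitter e k m = transmitter e k n) : vC e m = vC e n := by
  unfold transmitter at ht
  rw [← h1] at ht
  have hcard := erase_card_eq e k m hk
  refine Fin.ext (transSel_inj ?_ ?_ ht)
  · rw [hcard]; exact (vC e m).2
  · rw [hcard]; exact (vC e n).2

lemma pidx_eq_self (e : Fin N ≃ MasterT K r p0) (k i : Fin K) (n : Fin N)
    (hk : k ∈ hB e n) (hiB : i ∉ hB e n) (hhost : newhost e n = i)
    (hZ : insert i ((hB e n).erase k) ∈ powersetCard r (univ.erase k))
    (hj : i ∈ insert i ((hB e n).erase k))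
    (hu : transmitter e k n ∈ insert i ((hB e n).erase k))
    (hne : transmitter e k n ≠ i) :
    pidx e k (insert i ((hB e n).erase k)) hZ i hj (transmitter e k n) hu hne
      (dC e n) (wC e n) = n := by
  have hiBe : i ∉ (hB e n).erase k := fun hh => hiB (Finset.mem_of_mem_erase hh)
  have h1 : hB e (pidx e k (insert i ((hB e n).erase k)) hZ i hj (transmitter e k n) hu hne
      (dC e n) (wC e n)) = hB e n := by
    rw [hB_pidx, Finset.erase_insert hiBe, Finset.insert_erase hk]
  apply master_ext e _ n h1
  · rw [dC_pidx]
  · refine uC_eq e h1 ?_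
    rw [newhost_pidx, hhost]
  · refine vC_eq e k h1 ?_ ?_
    · rw [h1]; exact hk
    · rw [transmitter_pidx]
  · rw [wC_pidx]

lemma pbit_mask (e : Fin N ≃ MasterT K r p0) (k : Fin K) (W : Fin N → Bool) (i : Fin K)
    (hik : i ≠ k) {Z : Finset (Fin K)} (d : Fin (K + 1)) (w : Fin p0) (u : Fin K)
    {j : Fin K} (hiZ : i ∈ Z) (hji : j ≠ i) :
    pbit e k (fun m => if m ∈ Cdb e i then W m else false) Z d w u j
      = pbit e k W Z d w u j := by
  unfold pbit
  split
  · next h =>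
    congr 1
    have hmem : (pidx e k Z h.1 j h.2.1 u h.2.2.1 h.2.2.2 d w) ∈ Cdb e i := by
      rw [mem_Cdb, hB_pidx]
      exact Finset.mem_insert_of_mem (Finset.mem_erase.mpr ⟨Ne.symm hji, hiZ⟩)
    beta_reduce
    rw [if_pos hmem]
  · rfl

lemma dR_correct (e : Fin N ≃ MasterT K r p0) (k i : Fin K) (hik : i ≠ k)
    (W : Fin N → Bool) (n : Fin N) (hn : n ∈ CtR e k i) :
    dR e k i (fun m => if m ∈ Cdb e i then W m else false)
      (fun j => encR e k j.1 W) n = W n := by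
  rw [mem_CtR] at hn
  obtain ⟨-, hcase⟩ := hn
  unfold dR
  by_cases hiB : i ∈ hB e n
  · rw [dif_pos hiB]
    simp [Cdb, hiB]
  · rw [dif_neg hiB]
    have h2 : k ∈ hB e n ∧ newhost e n = i ∧ i ≠ k := by
      rcases hcase with h1 | hh
      · exact absurd h1 hiB
      · exact ⟨hh.1, hh.2, hik⟩
    rw [dif_pos h2]
    have hk := h2.1
    have hhost := h2.2.1
    have hBc : (hB e n).card = r := (e n).1.cardB
    have h1r : 1 ≤ r := hBc ▸ Finset.card_pos.mpr ⟨k, hk⟩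
    have hiBe : i ∉ (hB e n).erase k := fun hh => hiB (Finset.mem_of_mem_erase hh)
    have hu'B : transmitter e k n ∈ (hB e n).erase k := transmitter_mem e k n hk
    have hu'k : transmitter e k n ≠ k := (Finset.mem_erase.mp hu'B).1
    have hu'i : transmitter e k n ≠ i := fun hh => hiB (hh ▸ Finset.mem_of_mem_erase hu'B)
    have hZmem : insert i ((hB e n).erase k) ∈ powersetCard r (univ.erase k) := by
      rw [Finset.mem_powersetCard]
      constructor
      · intro x hx
        rcases Finset.mem_insert.mp hx with rfl | hx
        · exact Finset.mem_erase.mpr ⟨hik, Finset.mem_univ _⟩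
        · exact Finset.mem_erase.mpr ⟨(Finset.mem_erase.mp hx).1, Finset.mem_univ _⟩
      · rw [Finset.card_insert_of_notMem hiBe, Finset.card_erase_of_mem hk, hBc]
        omega
    have hiZ : i ∈ insert i ((hB e n).erase k) := Finset.mem_insert_self _ _
    have hu'Z : transmitter e k n ∈ insert i ((hB e n).erase k) :=
      Finset.mem_insert_of_mem hu'B
    unfold encR
    simp only [Equiv.symm_apply_apply]
    rw [toZ_ofZ]
    rw [Finset.sum_congr rfl (fun j hj =>
      pbit_mask e k W i hik (dC e n) (wC e n) (transmitter e k n)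
        hiZ (Finset.mem_erase.mp hj).1)]
    have hiZu : i ∈ (insert i ((hB e n).erase k)).erase (transmitter e k n) :=
      Finset.mem_erase.mpr ⟨Ne.symm hu'i, hiZ⟩
    rw [← Finset.add_sum_erase _ _ hiZu, zmod2_cancel]
    have hpb : pbit e k W (insert i ((hB e n).erase k)) (dC e n) (wC e n)
        (transmitter e k n) i = toZ (W n) := by
      unfold pbit
      rw [dif_pos ⟨hZmem, hiZ, hu'Z, hu'i⟩]
      congr 1
      rw [pidx_eq_self e k i n hk hiB hhost]
    rw [hpb, ofZ_toZ]

end DecCorrect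

end Rebal


open Finset

namespace Rebal

variable {K r p0 N : ℕ}

lemma sendSet_subset_Cdb (e : Fin N ≃ MasterT K r p0) (hr0 : 0 < r) (i : Fin K) {n : Fin N}
    (hn : n ∈ sendSet e hr0 i) : n ∈ Cdb e i := by
  rw [sendSet, mem_filter] at hn
  rw [mem_Cdb, ← hn.2.2]
  exact sender_mem e hr0 n

lemma encA_local (e : Fin N ≃ MasterT K r p0) (hr0 : 0 < r) (i : Fin K)
    (W W' : Fin N → Bool) (hWW : ∀ n ∈ Cdb e i, W n = W' n) :
    encA e hr0 i W = encA e hr0 i W' := by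
  funext a
  unfold encA
  exact hWW _ (sendSet_subset_Cdb e hr0 i ((sendSet e hr0 i).equivFin.symm a).2)

lemma decA_correct (e : Fin N ≃ MasterT K r p0) (hr0 : 0 < r) (i : Fin K)
    (W : Fin N → Bool) (n : Fin N) (hn : n ∈ Cadd e hr0 i.castSucc) :
    (if n ∈ Cdb e i then W n else false) = W n := by
  rw [mem_Cadd, castSucc_mem_SsetA] at hn
  rw [if_pos]
  rw [mem_Cdb]
  split at hn
  · exact Finset.mem_of_mem_erase hn
  · exact hn

lemma decNewA_correct (e : Fin N ≃ MasterT K r p0) (hr0 : 0 < r)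
    (W : Fin N → Bool) (n : Fin N) (hn : n ∈ Cadd e hr0 (Fin.last K)) :
    decNewA e hr0 (fun j => encA e hr0 j W) n = W n := by
  rw [mem_Cadd, last_mem_SsetA] at hn
  have hmem : n ∈ sendSet e hr0 (sender e hr0 n) := by
    rw [sendSet, mem_filter]
    exact ⟨mem_univ _, hn, rfl⟩
  unfold decNewA
  rw [dif_pos hmem]
  show W _ = W n
  rw [Equiv.symm_apply_apply]

section ExactlyR

variable {K r p0 N : ℕ}

lemma filter_Cdb_eq (e : Fin N ≃ MasterT K r p0) (n : Fin N) :
    (univ.filter (fun i => n ∈ Cdb e i)) = hB e n := by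
  ext i
  simp [mem_Cdb]

lemma exactly_r_Cdb (e : Fin N ≃ MasterT K r p0) (n : Fin N) :
    (univ.filter (fun i => n ∈ Cdb e i)).card = r := by
  rw [filter_Cdb_eq]
  exact (e n).1.cardB

lemma cover_Cdb (e : Fin N ≃ MasterT K r p0) (hr0 : 0 < r) (n : Fin N) :
    ∃ i ∈ (univ : Finset (Fin K)), n ∈ Cdb e i := by
  have hBc : (hB e n).card = r := (e n).1.cardB
  have : (hB e n).Nonempty := by
    rw [← Finset.card_pos, hBc]; exact hr0
  obtain ⟨i, hi⟩ := this
  exact ⟨i, mem_univ _, (mem_Cdb e i n).mpr hi⟩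

lemma filter_CtR_eq_of_not_mem (e : Fin N ≃ MasterT K r p0) (k : Fin K) (n : Fin N)
    (hk : k ∉ hB e n) :
    ((univ.erase k).filter (fun i => n ∈ CtR e k i)) = hB e n := by
  ext i
  simp only [mem_filter, Finset.mem_erase, mem_univ, and_true, true_and, mem_CtR]
  constructor
  · rintro ⟨hik, -, (h | h)⟩
    · exact h
    · exact absurd h.1 hk
  · intro hi
    have hik : i ≠ k := fun hh => hk (hh ▸ hi)
    exact ⟨hik, hik, Or.inl hi⟩

lemma filter_CtR_eq_of_mem (e : Fin N ≃ MasterT K r p0) (k : Fin K) (n : Fin N)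
    (hk : k ∈ hB e n) :
    ((univ.erase k).filter (fun i => n ∈ CtR e k i))
      = insert (newhost e n) ((hB e n).erase k) := by
  ext i
  simp only [mem_filter, Finset.mem_erase, mem_univ, and_true, true_and, mem_CtR,
    Finset.mem_insert]
  constructor
  · rintro ⟨hik, -, (h | h)⟩
    · exact Or.inr ⟨hik, h⟩
    · exact Or.inl h.2.symm
  · rintro (rfl | h)
    · have hnk : newhost e n ≠ k := fun hh => newhost_not_mem e n (hh ▸ hk)
      exact ⟨hnk, hnk, Or.inr ⟨hk, rfl⟩⟩
    · exact ⟨h.1, h.1, Or.inl h.2⟩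

lemma exactly_r_CtR (e : Fin N ≃ MasterT K r p0) (k : Fin K) (n : Fin N) :
    ((univ.erase k).filter (fun i => n ∈ CtR e k i)).card = r := by
  by_cases hk : k ∈ hB e n
  · rw [filter_CtR_eq_of_mem e k n hk]
    have hBc : (hB e n).card = r := (e n).1.cardB
    have h1r : 1 ≤ r := hBc ▸ Finset.card_pos.mpr ⟨k, hk⟩
    rw [Finset.card_insert_of_notMem
      (fun hh => newhost_not_mem e n (Finset.mem_of_mem_erase hh)),
      Finset.card_erase_of_mem hk, hBc]
    omega
  · rw [filter_CtR_eq_of_not_mem e k n hk]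
    exact (e n).1.cardB

lemma cover_CtR (e : Fin N ≃ MasterT K r p0) (k : Fin K) (hr2 : 2 ≤ r) (n : Fin N) :
    ∃ i ∈ (univ : Finset (Fin K)).erase k, n ∈ CtR e k i := by
  have hBc : (hB e n).card = r := (e n).1.cardB
  have : ((hB e n).erase k).Nonempty := by
    rw [← Finset.card_pos]
    have := Finset.card_erase_le (s := hB e n) (a := k)
    have h2 := Finset.pred_card_le_card_erase (s := hB e n) (a := k)
    omega
  obtain ⟨i, hi⟩ := this
  have hik : i ≠ k := (Finset.mem_erase.mp hi).1
  refine ⟨i, Finset.mem_erase.mpr ⟨hik, mem_univ _⟩, ?_⟩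
  rw [mem_CtR]
  exact ⟨hik, Or.inl (Finset.mem_of_mem_erase hi)⟩

lemma exactly_r_Cadd (e : Fin N ≃ MasterT K r p0) (hr0 : 0 < r) (n : Fin N) :
    ((univ : Finset (Fin (K + 1))).filter (fun i => n ∈ Cadd e hr0 i)).card = r := by
  have h1 : (univ.filter (fun i => n ∈ Cadd e hr0 i)) = SsetA e hr0 n := by
    ext i; simp [mem_Cadd]
  rw [h1]
  have hBc : (hB e n).card = r := (e n).1.cardB
  unfold SsetA
  split
  · rw [Finset.card_insert_of_notMem, Finset.card_image_of_injective _
      (Fin.castSucc_injective K), Finset.card_erase_of_mem (sender_mem e hr0 n), hBc]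
    · omega
    · intro hh
      obtain ⟨x, -, hxx⟩ := Finset.mem_image.mp hh
      exact (Fin.castSucc_lt_last x).ne hxx
  · rw [Finset.card_image_of_injective _ (Fin.castSucc_injective K), hBc]

lemma cover_Cadd (e : Fin N ≃ MasterT K r p0) (hr0 : 0 < r) (n : Fin N) :
    ∃ i ∈ (univ : Finset (Fin (K + 1))), n ∈ Cadd e hr0 i := by
  have hBc : (hB e n).card = r := (e n).1.cardB
  have hne : (hB e n).Nonempty := by rw [← Finset.card_pos, hBc]; exact hr0
  obtain ⟨x, hx⟩ := hne
  by_cases hd : (dC e n : ℕ) < r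
  · refine ⟨Fin.last K, mem_univ _, ?_⟩
    rw [mem_Cadd, last_mem_SsetA]
    exact hd
  · refine ⟨x.castSucc, mem_univ _, ?_⟩
    rw [mem_Cadd, castSucc_mem_SsetA, if_neg hd]
    exact hx

end ExactlyR

section Cards

variable {K r p0 N : ℕ}

lemma card_Cdb (e : Fin N ≃ MasterT K r p0) (i : Fin K) :
    (Cdb e i).card = ((powersetCard r (univ : Finset (Fin K))).filter
        (fun B => i ∈ B)).card * ((K + 1) * ((K - r) * ((r - 1) * p0))) := by
  unfold Cdb hB
  rw [card_filter_comp_equiv e (fun x : MasterT K r p0 => i ∈ x.1.1)]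
  rw [card_filter_fst (fun B : BSet K r => i ∈ B.1)]
  rw [card_filter_subtype (powersetCard r (univ : Finset (Fin K)))
    (fun B : BSet K r => i ∈ B.1) (fun B => i ∈ B) (fun x => Iff.rfl)]
  congr 1
  simp [Fintype.card_prod]

lemma card_CtR (e : Fin N ≃ MasterT K r p0) (k i : Fin K) (hik : i ≠ k) :
    (CtR e k i).card
      = ((powersetCard r (univ : Finset (Fin K))).filter (fun B => i ∈ B)).card
          * ((K + 1) * ((K - r) * ((r - 1) * p0)))
        + ((powersetCard r (univ : Finset (Fin K))).filter
            (fun B => k ∈ B ∧ i ∉ B)).card * ((K + 1) * (1 * ((r - 1) * p0))) := by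
  have hsplit : CtR e k i = Cdb e i ∪ univ.filter
      (fun n => (k ∈ hB e n ∧ i ∉ hB e n) ∧ newhost e n = i) := by
    ext n
    rw [mem_CtR, Finset.mem_union, mem_Cdb, mem_filter]
    constructor
    · rintro ⟨-, (h | h)⟩
      · exact Or.inl h
      · by_cases hi : i ∈ hB e n
        · exact Or.inl hi
        · exact Or.inr ⟨mem_univ _, ⟨h.1, hi⟩, h.2⟩
    · rintro (h | h)
      · exact ⟨hik, Or.inl h⟩
      · exact ⟨hik, Or.inr ⟨h.2.1.1, h.2.2⟩⟩
  have hdisj : Disjoint (Cdb e i) (univ.filter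
      (fun n => (k ∈ hB e n ∧ i ∉ hB e n) ∧ newhost e n = i)) := by
    rw [Finset.disjoint_left]
    intro n h1 h2
    rw [mem_Cdb] at h1
    exact ((Finset.mem_filter.mp h2).2.1.2) h1
  rw [hsplit, Finset.card_union_of_disjoint hdisj, card_Cdb]
  congr 1
  unfold hB newhost uC
  rw [card_filter_comp_equiv e (fun x : MasterT K r p0 =>
      (k ∈ x.1.1 ∧ i ∉ x.1.1) ∧ (hostIso x.1 x.2.2.1 : Fin K) = i)]
  rw [card_filter_prod_dep (fun B : BSet K r => k ∈ B.1 ∧ i ∉ B.1)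
    (fun (B : BSet K r) (y : Fin (K + 1) × (Fin (K - r) × (Fin (r - 1) × Fin p0))) =>
      (hostIso B y.2.1 : Fin K) = i)]
  have hinner : ∀ B : BSet K r, k ∈ B.1 ∧ i ∉ B.1 →
      (univ.filter (fun y : Fin (K + 1) × (Fin (K - r) × (Fin (r - 1) × Fin p0)) =>
        (hostIso B y.2.1 : Fin K) = i)).card = (K + 1) * (1 * ((r - 1) * p0)) := by
    intro B hBi
    rw [card_filter_snd (fun z : Fin (K - r) × (Fin (r - 1) × Fin p0) =>
      (hostIso B z.1 : Fin K) = i)]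
    rw [card_filter_fst (fun u : Fin (K - r) => (hostIso B u : Fin K) = i)]
    have h1 : (univ.filter (fun u : Fin (K - r) => (hostIso B u : Fin K) = i)).card = 1 := by
      unfold hostIso
      convert card_filter_orderIso_eq B.card_compl (Finset.mem_compl.mpr hBi.2) using 3
    rw [h1, Fintype.card_fin]
    simp [Fintype.card_prod]
  rw [Finset.sum_congr rfl (fun B hb => hinner B (Finset.mem_filter.mp hb).2),
    Finset.sum_const, smul_eq_mul]
  rw [card_filter_subtype (powersetCard r (univ : Finset (Fin K)))
    (fun B : BSet K r => k ∈ B.1 ∧ i ∉ B.1) (fun B => k ∈ B ∧ i ∉ B) (fun x => Iff.rfl)]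

lemma card_kmem_notmem_eq {α : Type*} [Fintype α] [DecidableEq α] (t : ℕ) (k i j : α)
    (hik : i ≠ k) (hjk : j ≠ k) :
    ((powersetCard t (univ : Finset α)).filter (fun B => k ∈ B ∧ i ∉ B)).card
      = ((powersetCard t (univ : Finset α)).filter (fun B => k ∈ B ∧ j ∉ B)).card := by
  refine card_filter_swap_pred t i j _ _ (fun B => ?_)
  rw [mem_image_perm, mem_image_perm]
  simp only [Equiv.symm_swap, Equiv.swap_apply_left]
  rw [Equiv.swap_apply_of_ne_of_ne (Ne.symm hik) (Ne.symm hjk)]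

lemma card_CtR_eq (e : Fin N ≃ MasterT K r p0) (k i j : Fin K) (hik : i ≠ k) (hjk : j ≠ k) :
    (CtR e k i).card = (CtR e k j).card := by
  rw [card_CtR e k i hik, card_CtR e k j hjk, card_mem_powersetCard_eq r i j,
    card_kmem_notmem_eq r k i j hik hjk]

lemma card_Cdb_eq (e : Fin N ≃ MasterT K r p0) (i j : Fin K) :
    (Cdb e i).card = (Cdb e j).card := by
  rw [card_Cdb, card_Cdb, card_mem_powersetCard_eq r i j]

lemma card_fin_lt_filter (m t : ℕ) (h : t ≤ m) :
    ((univ : Finset (Fin m)).filter (fun d : Fin m => (d : ℕ) < t)).card = t := by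
  have hb : ((univ : Finset (Fin m)).filter (fun d : Fin m => (d : ℕ) < t)).card
      = (univ : Finset (Fin t)).card := by
    refine Finset.card_bij
      (fun d hd => (⟨(d : ℕ), (Finset.mem_filter.mp hd).2⟩ : Fin t)) ?_ ?_ ?_
    · intro d hd; exact mem_univ _
    · intro a ha b hb hab
      exact Fin.ext (by simpa using congrArg Fin.val hab)
    · intro b _
      exact ⟨⟨(b : ℕ), lt_of_lt_of_le b.2 h⟩, Finset.mem_filter.mpr ⟨mem_univ _, b.2⟩, rfl⟩
  rw [hb, card_univ, Fintype.card_fin]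

lemma card_Cadd_last (e : Fin N ≃ MasterT K r p0) (hr0 : 0 < r) (hrK1 : r ≤ K + 1) :
    (Cadd e hr0 (Fin.last K)).card
      = (powersetCard r (univ : Finset (Fin K))).card * (r * ((K - r) * ((r - 1) * p0))) := by
  have h1 : Cadd e hr0 (Fin.last K) = univ.filter (fun n => (dC e n : ℕ) < r) := by
    ext n
    rw [mem_Cadd, last_mem_SsetA, mem_filter]
    simp
  rw [h1]
  unfold dC
  rw [card_filter_comp_equiv e (fun x : MasterT K r p0 => (x.2.1 : ℕ) < r)]
  rw [card_filter_snd (fun y : Fin (K + 1) × (Fin (K - r) × (Fin (r - 1) × Fin p0)) =>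
    (y.1 : ℕ) < r)]
  rw [card_filter_fst (fun d : Fin (K + 1) => (d : ℕ) < r)]
  rw [card_fin_lt_filter (K + 1) r hrK1]
  rw [Fintype.card_coe]
  congr 1
  simp [Fintype.card_prod]

lemma card_jsel_filter (hr0 : 0 < r) (hrK1 : r ≤ K + 1) (B : BSet K r) {i0 : Fin K}
    (hi0 : i0 ∈ B.1) :
    ((univ : Finset (Fin (K + 1))).filter
      (fun d : Fin (K + 1) => (d : ℕ) < r → jsel hr0 B d ≠ i0)).card = K := by
  have hneg : ((univ : Finset (Fin (K + 1))).filter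
      (fun d : Fin (K + 1) => ¬((d : ℕ) < r → jsel hr0 B d ≠ i0))).card = 1 := by
    rw [Finset.card_eq_one]
    set v := (B.1.orderIsoOfFin B.cardB).symm ⟨i0, hi0⟩ with hv
    refine ⟨⟨(v : ℕ), lt_of_lt_of_le v.2 hrK1⟩, ?_⟩
    ext d
    simp only [mem_filter, mem_univ, true_and, Finset.mem_singleton,
      Classical.not_imp, not_not]
    constructor
    · rintro ⟨hd, hjs⟩
      rw [jsel, dif_pos hd] at hjs
      have h2 : B.1.orderIsoOfFin B.cardB ⟨(d : ℕ), hd⟩ = ⟨i0, hi0⟩ := Subtype.ext hjs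
      have h3 : (⟨(d : ℕ), hd⟩ : Fin r) = v := by
        rw [hv, ← h2, OrderIso.symm_apply_apply]
      exact Fin.ext (by simpa using congrArg Fin.val h3)
    · rintro rfl
      have hd : ((⟨(v : ℕ), lt_of_lt_of_le v.2 hrK1⟩ : Fin (K + 1)) : ℕ) < r := v.2
      refine ⟨hd, ?_⟩
      rw [jsel, dif_pos hd]
      have h4 : (⟨((⟨(v : ℕ), lt_of_lt_of_le v.2 hrK1⟩ : Fin (K + 1)) : ℕ), hd⟩ : Fin r)
          = v := Fin.ext rfl
      rw [h4, hv, OrderIso.apply_symm_apply]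
  have htot := Finset.card_filter_add_card_filter_not
    (s := (univ : Finset (Fin (K + 1))))
    (p := fun d : Fin (K + 1) => (d : ℕ) < r → jsel hr0 B d ≠ i0)
  rw [card_univ, Fintype.card_fin] at htot
  omega

lemma card_Cadd_castSucc (e : Fin N ≃ MasterT K r p0) (hr0 : 0 < r) (hrK1 : r ≤ K + 1)
    (i0 : Fin K) :
    (Cadd e hr0 i0.castSucc).card
      = ((powersetCard r (univ : Finset (Fin K))).filter (fun B => i0 ∈ B)).card
          * (K * ((K - r) * ((r - 1) * p0))) := by
  have h1 : Cadd e hr0 i0.castSucc = univ.filter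
      (fun n => i0 ∈ hB e n ∧ ((dC e n : ℕ) < r → jsel hr0 (e n).1 (dC e n) ≠ i0)) := by
    ext n
    rw [mem_Cadd, castSucc_mem_SsetA, mem_filter]
    simp only [mem_univ, true_and]
    unfold sender
    split
    · next hd =>
      constructor
      · intro h
        exact ⟨Finset.mem_of_mem_erase h, fun _ => Ne.symm (Finset.mem_erase.mp h).1⟩
      · intro h
        exact Finset.mem_erase.mpr ⟨Ne.symm (h.2 hd), h.1⟩
    · next hd =>
      constructor
      · intro h
        exact ⟨h, fun hc => absurd hc hd⟩
      · intro h
        exact h.1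
  rw [h1]
  unfold hB dC
  rw [card_filter_comp_equiv e (fun x : MasterT K r p0 =>
    i0 ∈ x.1.1 ∧ ((x.2.1 : ℕ) < r → jsel hr0 x.1 x.2.1 ≠ i0))]
  rw [card_filter_prod_dep (fun B : BSet K r => i0 ∈ B.1)
    (fun (B : BSet K r) (y : Fin (K + 1) × (Fin (K - r) × (Fin (r - 1) × Fin p0))) =>
      ((y.1 : ℕ) < r → jsel hr0 B y.1 ≠ i0))]
  have hinner : ∀ B : BSet K r, i0 ∈ B.1 →
      (univ.filter (fun y : Fin (K + 1) × (Fin (K - r) × (Fin (r - 1) × Fin p0)) =>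
        ((y.1 : ℕ) < r → jsel hr0 B y.1 ≠ i0))).card = K * ((K - r) * ((r - 1) * p0)) := by
    intro B hi0
    rw [card_filter_fst (fun d : Fin (K + 1) => ((d : ℕ) < r → jsel hr0 B d ≠ i0))]
    rw [card_jsel_filter hr0 hrK1 B hi0]
    congr 1
    simp [Fintype.card_prod]
  rw [Finset.sum_congr rfl (fun B hb => hinner B (Finset.mem_filter.mp hb).2),
    Finset.sum_const, smul_eq_mul]
  rw [card_filter_subtype (powersetCard r (univ : Finset (Fin K)))
    (fun B : BSet K r => i0 ∈ B.1) (fun B => i0 ∈ B) (fun x => Iff.rfl)]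

lemma K_mul_fiber (i0 : Fin K) :
    K * ((powersetCard r (univ : Finset (Fin K))).filter (fun B => i0 ∈ B)).card
      = (powersetCard r (univ : Finset (Fin K))).card * r := by
  have hsum := sum_card_mem_powersetCard (α := Fin K) r
  rw [Finset.sum_congr rfl (fun j (_ : j ∈ univ) => card_mem_powersetCard_eq r j i0),
    Finset.sum_const, smul_eq_mul, card_univ, Fintype.card_fin] at hsum
  exact hsum

lemma card_Cadd_eq (e : Fin N ≃ MasterT K r p0) (hr0 : 0 < r) (hrK1 : r ≤ K + 1)
    (i j : Fin (K + 1)) : (Cadd e hr0 i).card = (Cadd e hr0 j).card := by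
  have key : ∀ i0 : Fin K, (Cadd e hr0 i0.castSucc).card = (Cadd e hr0 (Fin.last K)).card := by
    intro i0
    rw [card_Cadd_castSucc e hr0 hrK1 i0, card_Cadd_last e hr0 hrK1,
      ← mul_assoc, mul_comm _ K, K_mul_fiber, mul_assoc]
  induction i using Fin.lastCases with
  | last =>
    induction j using Fin.lastCases with
    | last => rfl
    | cast j0 => rw [key j0]
  | cast i0 =>
    induction j using Fin.lastCases with
    | last => rw [key i0]
    | cast j0 => rw [key i0, key j0]

end Cards

end Rebal


open Finset

namespace Rebal

variable {K r p0 N : ℕ}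

lemma sum_lR (k : Fin K) :
    ∑ i ∈ (univ : Finset (Fin K)).erase k, lR r p0 k i
      = ((K - 1).choose r * r) * ((K + 1) * p0) := by
  have hlR : ∀ i : Fin K, lR r p0 k i = (ZS r k i).card * ((K + 1) * p0) := by
    intro i
    rw [lR, TiR, Finset.card_product, Finset.card_univ]
    congr 1
    simp [Fintype.card_prod]
  rw [Finset.sum_congr rfl (fun i _ => hlR i), ← Finset.sum_mul]
  congr 1
  have hZS : ∀ i : Fin K, (ZS r k i).card
      = ∑ Z ∈ powersetCard r ((univ : Finset (Fin K)).erase k), if i ∈ Z then 1 else 0 :=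
    fun i => Finset.card_filter _ _
  rw [Finset.sum_congr rfl (fun i _ => hZS i), Finset.sum_comm]
  have hZin : ∀ Z ∈ powersetCard r ((univ : Finset (Fin K)).erase k),
      (∑ i ∈ (univ : Finset (Fin K)).erase k, if i ∈ Z then 1 else 0) = r := by
    intro Z hZ
    rw [← Finset.card_filter]
    have hsub := (Finset.mem_powersetCard.mp hZ).1
    have hfz : ((univ : Finset (Fin K)).erase k).filter (· ∈ Z) = Z := by
      ext x
      simp only [mem_filter]
      exact ⟨fun h => h.2, fun h => ⟨hsub h, h⟩⟩
    rw [hfz, (Finset.mem_powersetCard.mp hZ).2]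
  rw [Finset.sum_congr rfl hZin, Finset.sum_const, smul_eq_mul, Finset.card_powersetCard,
    Finset.card_erase_of_mem (mem_univ k), Finset.card_univ, Fintype.card_fin]

lemma sum_lA (e : Fin N ≃ MasterT K r p0) (hr0 : 0 < r) :
    ∑ i : Fin K, lA e hr0 i = (Cadd e hr0 (Fin.last K)).card := by
  have h1 : Cadd e hr0 (Fin.last K) = univ.filter (fun n => (dC e n : ℕ) < r) := by
    ext n
    rw [mem_Cadd, last_mem_SsetA, mem_filter]
    simp
  unfold lA sendSet
  rw [Finset.sum_congr rfl (fun i (_ : i ∈ univ) => Finset.card_filter _ _), Finset.sum_comm,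
    h1, Finset.card_filter]
  refine Finset.sum_congr rfl (fun n _ => ?_)
  by_cases hd : (dC e n : ℕ) < r
  · simp only [hd, true_and, if_true]
    rw [Finset.sum_ite_eq univ (sender e hr0 n) (fun _ => 1)]
    simp
  · simp [hd]

lemma descF_key (hr : 2 ≤ r) (hrK : r + 1 ≤ K) :
    Nat.descFactorial (K + 1) (K + 1 - r) * (Nat.factorial r) = Nat.factorial (K + 1) := by
  have h := Nat.factorial_mul_descFactorial (show K + 1 - r ≤ K + 1 by omega)
  have h2 : K + 1 - (K + 1 - r) = r := by omega
  rw [h2] at h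
  rw [mul_comm]
  exact h

lemma arith_main (hr : 2 ≤ r) (hrK : r + 1 ≤ K) :
    (r - 1) * Nat.descFactorial (K + 1) (K + 1 - r)
      = K.choose r * ((K + 1) * ((K - r) * ((r - 1) * Nat.factorial (K - r - 1)))) := by
  apply Nat.eq_of_mul_eq_mul_right (Nat.factorial_pos r)
  have h2 := descF_key hr hrK
  have hc : K.choose r * (Nat.factorial r) * Nat.factorial (K - r) = (Nat.factorial K) :=
    Nat.choose_mul_factorial_mul_factorial (by omega)
  have hm : (K - r) * Nat.factorial (K - r - 1) = Nat.factorial (K - r) := Nat.mul_factorial_pred (by omega)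
  calc (r - 1) * Nat.descFactorial (K + 1) (K + 1 - r) * (Nat.factorial r)
      = (r - 1) * (Nat.descFactorial (K + 1) (K + 1 - r) * (Nat.factorial r)) := by ring
    _ = (r - 1) * Nat.factorial (K + 1) := by rw [h2]
    _ = (r - 1) * ((K + 1) * (Nat.factorial K)) := by rw [Nat.factorial_succ]
    _ = (r - 1) * ((K + 1) * (K.choose r * (Nat.factorial r) * Nat.factorial (K - r))) := by rw [hc]
    _ = (r - 1) * ((K + 1) * (K.choose r * (Nat.factorial r) * ((K - r) * Nat.factorial (K - r - 1)))) := by rw [hm]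
    _ = K.choose r * ((K + 1) * ((K - r) * ((r - 1) * Nat.factorial (K - r - 1)))) * (Nat.factorial r) := by ring

lemma arith_rem (hr : 2 ≤ r) (hrK : r + 1 ≤ K) :
    ((K - 1).choose r * ((K + 1) * (Nat.factorial (K - r - 1) * K)))
      = Nat.descFactorial (K + 1) (K + 1 - r) := by
  apply Nat.eq_of_mul_eq_mul_right (Nat.factorial_pos r)
  rw [descF_key hr hrK]
  have hc : (K - 1).choose r * (Nat.factorial r) * Nat.factorial (K - 1 - r) = Nat.factorial (K - 1) :=
    Nat.choose_mul_factorial_mul_factorial (by omega)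
  have hs : K - r - 1 = K - 1 - r := by omega
  calc (K - 1).choose r * ((K + 1) * (Nat.factorial (K - r - 1) * K)) * (Nat.factorial r)
      = (K + 1) * (K * ((K - 1).choose r * (Nat.factorial r) * Nat.factorial (K - 1 - r))) := by rw [hs]; ring
    _ = (K + 1) * (K * Nat.factorial (K - 1)) := by rw [hc]
    _ = Nat.factorial (K + 1) := by
        have h1 : K * Nat.factorial (K - 1) = (Nat.factorial K) := Nat.mul_factorial_pred (by omega)
        rw [h1, ← Nat.factorial_succ]

end Rebal


/-- **Achievability (Theorem 1, achievability part).**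
For all `2 ≤ r ≤ K-1` and every file size `N` divisible by `(r-1)·P(K+1,K+1-r)`
(where `P(n,l) = n!/(n-l)!` is `Nat.descFactorial n l`), there is an `r`-balanced
database `C` on `[K]` such that (a) for every node `k` there are a target `r`-balanced
database on `[K] \ {k}` and a removal rebalancing scheme with total communication
`Σ_{i≠k} l_i = rN/((r-1)K)`, i.e. load `1/(r-1)`, and (b) there are a target
`r`-balanced database on `[K+1]` and an addition rebalancing scheme with total
communication `Σ_i l_i = rN/(K+1)`, i.e. load `1`.  Hence the rebalancing load
`1/(r-1) + 1` is achievable. -/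
theorem rebalancing_load_achievable (K r N : ℕ) (hr : 2 ≤ r) (hrK : r + 1 ≤ K)
    (hN : ((r - 1) * Nat.descFactorial (K + 1) (K + 1 - r)) ∣ N) :
    ∃ C : Fin K → Finset (Fin N),
      isBalancedOn N K r Finset.univ C ∧
      (∀ k : Fin K, ∃ Ct : Fin K → Finset (Fin N),
        isBalancedOn N K r (Finset.univ.erase k) Ct ∧
        ∃ sch : RemovalScheme N K C k Ct,
          ((∑ i ∈ Finset.univ.erase k, sch.l i : ℕ) : ℝ)
            = ((r : ℝ) * N) / (((r : ℝ) - 1) * K)) ∧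
      (∃ C' : Fin (K + 1) → Finset (Fin N),
        isBalancedOn N (K + 1) r Finset.univ C' ∧
        ∃ sch : AdditionScheme N K C C',
          ((∑ i : Fin K, sch.l i : ℕ) : ℝ) = ((r : ℝ) * N) / ((K : ℝ) + 1)) := by
  classical
  obtain ⟨m, hm⟩ := hN
  set p0 := Nat.factorial (K - r - 1) * m with hp0
  have hr0 : 0 < r := by omega
  have hrK1 : r ≤ K + 1 := by omega
  have hcard : Fintype.card (Rebal.MasterT K r p0) = N := by
    have h1 : Fintype.card (Rebal.MasterT K r p0)
        = K.choose r * ((K + 1) * ((K - r) * ((r - 1) * p0))) := by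
      simp [Rebal.MasterT, Rebal.BSet, Fintype.card_prod, Fintype.card_fin,
        Fintype.card_coe, Finset.card_powersetCard, Finset.card_univ]
    have h3 := Rebal.arith_main (K := K) (r := r) hr hrK
    rw [h1, hm, hp0]
    calc K.choose r * ((K + 1) * ((K - r) * ((r - 1) * (Nat.factorial (K - r - 1) * m))))
        = (K.choose r * ((K + 1) * ((K - r) * ((r - 1) * Nat.factorial (K - r - 1))))) * m := by
          ring
      _ = ((r - 1) * Nat.descFactorial (K + 1) (K + 1 - r)) * m := by rw [← h3]
  let e : Fin N ≃ Rebal.MasterT K r p0 := (Fintype.equivFinOfCardEq hcard).symm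
  have hKpos : (0 : ℝ) < (K : ℝ) := by
    have : 0 < K := by omega
    exact_mod_cast this
  refine ⟨Rebal.Cdb e, ⟨Rebal.cover_Cdb e hr0, Rebal.exactly_r_Cdb e,
    fun i _ j _ => Rebal.card_Cdb_eq e i j⟩, ?_, ?_⟩
  · intro k
    refine ⟨Rebal.CtR e k, ⟨Rebal.cover_CtR e k hr, Rebal.exactly_r_CtR e k,
      fun i hi j hj => Rebal.card_CtR_eq e k i j (Finset.mem_erase.mp hi).1
        (Finset.mem_erase.mp hj).1⟩, ?_⟩
    refine ⟨⟨Rebal.lR r p0 k, Rebal.encR e k,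
      fun i _ W W' h => Rebal.encR_local e k i W W' h,
      Rebal.dR e k, fun i hik W n hn => Rebal.dR_correct e k i hik W n hn⟩, ?_⟩
    have hsum := Rebal.sum_lR (K := K) (r := r) (p0 := p0) k
    have hid : ((((K - 1).choose r * r) * ((K + 1) * p0))) * ((r - 1) * K) = r * N := by
      rw [hm, hp0]
      have h2 := Rebal.arith_rem (K := K) (r := r) hr hrK
      calc (((K - 1).choose r * r) * ((K + 1) * (Nat.factorial (K - r - 1) * m)))
            * ((r - 1) * K)
          = (r * (r - 1) * m) * ((K - 1).choose r
              * ((K + 1) * (Nat.factorial (K - r - 1) * K))) := by ring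
        _ = (r * (r - 1) * m) * Nat.descFactorial (K + 1) (K + 1 - r) := by rw [h2]
        _ = r * ((r - 1) * Nat.descFactorial (K + 1) (K + 1 - r) * m) := by ring
    show ((∑ i ∈ Finset.univ.erase k, Rebal.lR r p0 k i : ℕ) : ℝ) = _
    rw [hsum]
    have hden : ((r : ℝ) - 1) * (K : ℝ) ≠ 0 := by
      have h1r : (1 : ℝ) < (r : ℝ) := by exact_mod_cast (by omega : 1 < r)
      have := hKpos
      nlinarith
    rw [eq_div_iff hden]
    have hcast := congrArg (Nat.cast : ℕ → ℝ) hid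
    push_cast [Nat.cast_sub (show 1 ≤ r by omega)] at hcast
    push_cast
    linarith
  · refine ⟨Rebal.Cadd e hr0, ⟨Rebal.cover_Cadd e hr0, Rebal.exactly_r_Cadd e hr0,
      fun i _ j _ => Rebal.card_Cadd_eq e hr0 hrK1 i j⟩, ?_⟩
    refine ⟨⟨Rebal.lA e hr0, Rebal.encA e hr0,
      fun i W W' h => Rebal.encA_local e hr0 i W W' h,
      (fun i masked _ n => masked n),
      fun i W n hn => Rebal.decA_correct e hr0 i W n hn,
      Rebal.decNewA e hr0, fun W n hn => Rebal.decNewA_correct e hr0 W n hn⟩, ?_⟩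
    have hsum := Rebal.sum_lA e hr0
    have hlast := Rebal.card_Cadd_last e hr0 hrK1
    have hid : ((Finset.powersetCard r (Finset.univ : Finset (Fin K))).card
        * (r * ((K - r) * ((r - 1) * p0)))) * (K + 1) = r * N := by
      rw [Finset.card_powersetCard, Finset.card_univ, Fintype.card_fin, hm, hp0]
      have h3 := Rebal.arith_main (K := K) (r := r) hr hrK
      calc (K.choose r * (r * ((K - r) * ((r - 1) * (Nat.factorial (K - r - 1) * m)))))
            * (K + 1)
          = (r * m) * (K.choose r * ((K + 1) * ((K - r)
              * ((r - 1) * Nat.factorial (K - r - 1))))) := by ring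
        _ = (r * m) * ((r - 1) * Nat.descFactorial (K + 1) (K + 1 - r)) := by rw [← h3]
        _ = r * ((r - 1) * Nat.descFactorial (K + 1) (K + 1 - r) * m) := by ring
    show ((∑ i : Fin K, Rebal.lA e hr0 i : ℕ) : ℝ) = _
    rw [hsum, hlast]
    have hden : (K : ℝ) + 1 ≠ 0 := by positivity
    rw [eq_div_iff hden]
    have hcast := congrArg (Nat.cast : ℕ → ℝ) hid
    push_cast at hcast
    push_cast
    linarith
end

section
/- Let K ≥ 1 and r ≥ 1 be integers with r ≤ K. For every r-balanced distributed database (C_i)_{i∈[K]} of an N-bit file on nodes [K], every target r-balanced database (C'_i)_{i∈[K+1]} of the same file on nodes [K+1], and every valid rebalancing scheme for node addition, the total communication satisfies Σ_{i∈[K]} l_i ≥ rN/(K+1); equivalently, the communication load satisfies L_add ≥ 1. -/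
open Finset

/-- **Converse for node addition.**
For `1 ≤ r ≤ K`, for every `r`-balanced database `C` of an `N`-bit file on `[K]`,
every target `r`-balanced database `C'` on `[K+1]`, and every valid rebalancing scheme
for node addition, the total communication satisfies `Σ_{i ∈ [K]} l_i ≥ rN/(K+1)`,
i.e. the communication load is at least `1`. -/
theorem addition_converse (K r N : ℕ) (hK : 1 ≤ K) (hr : 1 ≤ r) (hrK : r ≤ K)
    (C : Fin K → Finset (Fin N)) (hC : isBalancedOn N K r Finset.univ C)
    (C' : Fin (K + 1) → Finset (Fin N))
    (hC' : isBalancedOn N (K + 1) r Finset.univ C')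
    (sch : AdditionScheme N K C C') :
    ((∑ i : Fin K, sch.l i : ℕ) : ℝ) ≥ ((r : ℝ) * N) / ((K : ℝ) + 1) := by
  classical
  set S := C' (Fin.last K) with hS
  -- Step 1: S.card ≤ ∑ l i, via an injection from (S → Bool) into the codewords.
  have hinj : Function.Injective (fun v : {n // n ∈ S} → Bool =>
      (fun j : Fin K => sch.enc j
        (fun n => if h : n ∈ S then v ⟨n, h⟩ else false))) := by
    intro v v' hvv'
    funext n
    have h1 := sch.decNew_correct (fun n => if h : n ∈ S then v ⟨n, h⟩ else false) n.1 n.2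
    have h2 := sch.decNew_correct (fun n => if h : n ∈ S then v' ⟨n, h⟩ else false) n.1 n.2
    have hvv'' : (fun j : Fin K => sch.enc j
        (fun n => if h : n ∈ S then v ⟨n, h⟩ else false))
      = (fun j : Fin K => sch.enc j
        (fun n => if h : n ∈ S then v' ⟨n, h⟩ else false)) := hvv'
    rw [hvv''] at h1
    rw [h1] at h2
    simpa [dif_pos n.2] using h2
  have hcard := Fintype.card_le_of_injective _ hinj
  have hcard2 : (2 : ℕ) ^ S.card ≤ 2 ^ (∑ i : Fin K, sch.l i) := by
    simpa [Fintype.card_fun, Fintype.card_pi, Finset.prod_pow_eq_pow_sum] using hcard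
  have hle : S.card ≤ ∑ i : Fin K, sch.l i :=
    (Nat.pow_le_pow_iff_right (by norm_num)).mp hcard2
  -- Step 2: (K+1) * S.card = r * N by double counting.
  have hsum : ∑ i : Fin (K+1), (C' i).card = N * r := by
    have h1 : ∀ i : Fin (K+1), (C' i).card
        = ∑ n : Fin N, (if n ∈ C' i then 1 else 0) := by
      intro i
      rw [← Finset.card_filter]
      congr 1
      ext n
      simp
    calc ∑ i : Fin (K+1), (C' i).card
        = ∑ i : Fin (K+1), ∑ n : Fin N, (if n ∈ C' i then 1 else 0) := by
          exact Finset.sum_congr rfl (fun i _ => h1 i)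
      _ = ∑ n : Fin N, ∑ i : Fin (K+1), (if n ∈ C' i then 1 else 0) :=
          Finset.sum_comm
      _ = ∑ n : Fin N, r := by
          refine Finset.sum_congr rfl (fun n _ => ?_)
          rw [← Finset.card_filter]
          exact hC'.2.1 n
      _ = N * r := by simp [Finset.sum_const, Finset.card_univ, mul_comm]
  have heq : (K + 1) * S.card = r * N := by
    have hall : ∀ i : Fin (K+1), (C' i).card = S.card := fun i =>
      hC'.2.2 i (Finset.mem_univ i) (Fin.last K) (Finset.mem_univ _)
    have : ∑ i : Fin (K+1), (C' i).card = (K + 1) * S.card := by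
      rw [Finset.sum_congr rfl (fun i _ => hall i)]
      simp [Finset.sum_const, Finset.card_univ, mul_comm]
    rw [← this, hsum, Nat.mul_comm]
  -- Step 3: conclude over ℝ.
  rw [ge_iff_le, div_le_iff₀ (by positivity)]
  have : (r : ℝ) * N = ((K : ℝ) + 1) * S.card := by
    have := congrArg (Nat.cast : ℕ → ℝ) heq
    push_cast at this
    linarith
  rw [this]
  have hc : (S.card : ℝ) ≤ ((∑ i : Fin K, sch.l i : ℕ) : ℝ) := by exact_mod_cast hle
  nlinarith [hc, (by positivity : (0:ℝ) < (K:ℝ) + 1)]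
end

section
/- Let K and r be integers with 2 ≤ r ≤ K−1. For each tuple i = [i_1 … i_{K−r}] ∈ S([K],K−r), let T(i) ⊆ S([K+1],K+1−r) be the set consisting of the r tuples [j i_1 … i_{K−r}] for the r elements j ∈ [K] with j ∉ i, together with the K−r+1 tuples obtained from i by inserting the element K+1 into each of the K−r+1 possible positions. Then |T(i)| = K+1 for every i, the sets T(i), i ∈ S([K],K−r), are pairwise disjoint, and their union is all of S([K+1],K+1−r). -/
open Finset

/-- `S(A,l)`: ordered `l`-tuples (modelled as lists) of pairwise distinct elements of
the finite set `A ⊆ ℕ`. -/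
def tupleSet (A : Finset ℕ) (l : ℕ) : Set (List ℕ) :=
  {L : List ℕ | L.Nodup ∧ L.length = l ∧ ∀ x ∈ L, x ∈ A}

/-- For a tuple `i ∈ S([K],K-r)`, the set `T(i) ⊆ S([K+1],K+1-r)` consisting of the
tuples `[j i]` for the elements `j ∈ [K]` with `j ∉ i`, together with the tuples
obtained from `i` by inserting the element `K+1` into each possible position. -/
def Tset (K : ℕ) (i : List ℕ) : Set (List ℕ) :=
  {v : List ℕ | ∃ j ∈ Finset.Icc 1 K, j ∉ i ∧ v = j :: i} ∪
  {v : List ℕ | ∃ p ≤ i.length, v = i.insertIdx p (K + 1)}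

lemma insertIdx_eq_insertIdx {x : ℕ} : ∀ {p p' : ℕ} {l l' : List ℕ},
    x ∉ l → x ∉ l' → p ≤ l.length → p' ≤ l'.length →
    l.insertIdx p x = l'.insertIdx p' x → p = p' ∧ l = l'
  | 0, 0, l, l', _, _, _, _, h => by simpa using h
  | 0, p'+1, l, a'::t', hx, hx', hp, hp', h => by
      simp only [List.insertIdx_zero, List.insertIdx_succ_cons, List.cons.injEq] at h
      exact absurd (h.1 ▸ List.mem_cons_self (a := a') (l := t')) hx'
  | p+1, 0, a::t, l', hx, hx', hp, hp', h => by
      simp only [List.insertIdx_zero, List.insertIdx_succ_cons, List.cons.injEq] at h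
      exact absurd (h.1 ▸ List.mem_cons_self (a := a) (l := t)) hx
  | p+1, p'+1, a::t, a'::t', hx, hx', hp, hp', h => by
      simp only [List.insertIdx_succ_cons, List.cons.injEq] at h
      have := insertIdx_eq_insertIdx (x := x) (List.not_mem_of_not_mem_cons hx)
        (List.not_mem_of_not_mem_cons hx') (Nat.le_of_succ_le_succ hp)
        (Nat.le_of_succ_le_succ hp') h.2
      exact ⟨by omega, by rw [h.1, this.2]⟩

lemma exists_insertIdx_erase {x : ℕ} : ∀ {l : List ℕ}, x ∈ l →
    ∃ p ≤ (l.erase x).length, l = (l.erase x).insertIdx p x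
  | a::t, h => by
      by_cases hax : a = x
      · subst hax
        exact ⟨0, Nat.zero_le _, by simp⟩
      · have hxt : x ∈ t := (List.mem_cons.1 h).resolve_left (fun h' => hax h'.symm)
        obtain ⟨p, hp, hl⟩ := exists_insertIdx_erase hxt
        refine ⟨p+1, ?_, ?_⟩
        · rw [List.erase_cons_tail (by simp [hax])]; simpa using hp
        · rw [List.erase_cons_tail (by simp [hax]), List.insertIdx_succ_cons, ← hl]

lemma Tset_eq_coe (K : ℕ) (i : List ℕ) :
    Tset K i = ↑(((Finset.Icc 1 K \ i.toFinset).image (· :: i)) ∪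
      ((Finset.range (i.length + 1)).image (fun p => i.insertIdx p (K + 1)))) := by
  ext v
  simp only [Tset, Set.mem_union, Set.mem_setOf_eq, Finset.coe_union, Finset.coe_image,
    Set.mem_image, Finset.mem_coe, Finset.mem_sdiff, List.mem_toFinset, Finset.mem_range,
    Nat.lt_succ_iff]
  constructor
  · rintro (⟨j, hj, hji, rfl⟩ | ⟨p, hp, rfl⟩)
    · exact Or.inl ⟨j, ⟨hj, hji⟩, rfl⟩
    · exact Or.inr ⟨p, hp, rfl⟩
  · rintro (⟨j, ⟨hj, hji⟩, rfl⟩ | ⟨p, hp, rfl⟩)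
    · exact Or.inl ⟨j, hj, hji, rfl⟩
    · exact Or.inr ⟨p, hp, rfl⟩

lemma not_k1_mem (K : ℕ) {i : List ℕ} (hi : ∀ x ∈ i, x ∈ Finset.Icc 1 K) :
    (K + 1) ∉ i := fun h => by
  have := hi _ h
  simp only [Finset.mem_Icc] at this
  omega

/-- **Subfile splitting for node addition partitions `S([K+1],K+1-r)`.**
Let `2 ≤ r ≤ K-1`.  Then `|T(i)| = K+1` for every `i ∈ S([K],K-r)`, the sets `T(i)`
are pairwise disjoint, and their union over all `i ∈ S([K],K-r)` is all of
`S([K+1],K+1-r)`. -/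
theorem Tset_partitions (K r : ℕ) (hr : 2 ≤ r) (hrK : r + 1 ≤ K) :
    (∀ i ∈ tupleSet (Finset.Icc 1 K) (K - r), (Tset K i).ncard = K + 1) ∧
    (∀ i ∈ tupleSet (Finset.Icc 1 K) (K - r),
      ∀ i' ∈ tupleSet (Finset.Icc 1 K) (K - r),
        i ≠ i' → Disjoint (Tset K i) (Tset K i')) ∧
    (⋃ i ∈ tupleSet (Finset.Icc 1 K) (K - r), Tset K i)
      = tupleSet (Finset.Icc 1 (K + 1)) (K + 1 - r) := by
  refine ⟨?_, ?_, ?_⟩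
  · -- cardinality
    rintro i ⟨hnd, hlen, hmem⟩
    rw [Tset_eq_coe, Set.ncard_coe_finset]
    have hK1 : (K + 1) ∉ i := not_k1_mem K hmem
    rw [Finset.card_union_of_disjoint, Finset.card_image_of_injective _
        (fun a b h => by simpa using h),
      Finset.card_image_of_injOn]
    · rw [Finset.card_sdiff_of_subset (fun x hx => by simpa using hmem x (by simpa using hx)),
        Finset.card_range]
      have h1 : i.toFinset.card = K - r := by
        rw [List.toFinset_card_of_nodup hnd, hlen]
      have h2 : (Finset.Icc 1 K).card = K := by simp
      omega
    · intro p hp q hq h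
      simp only [Finset.mem_coe, Finset.mem_range, Nat.lt_succ_iff] at hp hq
      exact (insertIdx_eq_insertIdx hK1 hK1 hp hq h).1
    · rw [Finset.disjoint_left]
      rintro v hv hv'
      simp only [Finset.mem_image, Finset.mem_sdiff, Finset.mem_range, Finset.mem_Icc,
        List.mem_toFinset] at hv hv'
      obtain ⟨j, ⟨hj, _⟩, rfl⟩ := hv
      obtain ⟨p, hp, heq⟩ := hv'
      have hmem1 : (K + 1) ∈ i.insertIdx p (K + 1) :=
        (List.mem_insertIdx (Nat.lt_succ_iff.1 hp)).2 (Or.inl rfl)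
      rw [heq] at hmem1
      rcases List.mem_cons.1 hmem1 with h | h
      · omega
      · exact hK1 h
  · -- disjointness
    rintro i ⟨hnd, hlen, hmem⟩ i' ⟨hnd', hlen', hmem'⟩ hne
    have hK1 : (K + 1) ∉ i := not_k1_mem K hmem
    have hK1' : (K + 1) ∉ i' := not_k1_mem K hmem'
    rw [Set.disjoint_left]
    rintro v hv hv'
    rcases hv with ⟨j, hj, hji, rfl⟩ | ⟨p, hp, rfl⟩ <;>
      rcases hv' with ⟨j', hj', hji', heq⟩ | ⟨p', hp', heq⟩
    · simp only [List.cons.injEq] at heq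
      exact hne heq.2
    · have : (K + 1) ∈ i'.insertIdx p' (K + 1) := (List.mem_insertIdx hp').2 (Or.inl rfl)
      rw [← heq] at this
      rcases List.mem_cons.1 this with h | h
      · simp only [Finset.mem_Icc] at hj; omega
      · exact hK1 h
    · have : (K + 1) ∈ i.insertIdx p (K + 1) := (List.mem_insertIdx hp).2 (Or.inl rfl)
      rw [heq] at this
      rcases List.mem_cons.1 this with h | h
      · simp only [Finset.mem_Icc] at hj'; omega
      · exact hK1' h
    · exact hne (insertIdx_eq_insertIdx hK1 hK1' hp hp' heq).2
  · -- union
    ext v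
    simp only [Set.mem_iUnion, exists_prop]
    constructor
    · rintro ⟨i, ⟨hnd, hlen, hmem⟩, hv⟩
      rcases hv with ⟨j, hj, hji, rfl⟩ | ⟨p, hp, rfl⟩
      · refine ⟨List.nodup_cons.2 ⟨hji, hnd⟩, by simp [hlen]; omega, ?_⟩
        intro x hx
        rcases List.mem_cons.1 hx with rfl | hx
        · simp only [Finset.mem_Icc] at hj ⊢; omega
        · have := hmem x hx; simp only [Finset.mem_Icc] at this ⊢; omega
      · have hperm : (i.insertIdx p (K + 1)).Perm ((K + 1) :: i) :=
          List.perm_insertIdx _ _ hp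
        refine ⟨hperm.nodup_iff.2 (List.nodup_cons.2 ⟨not_k1_mem K hmem, hnd⟩), ?_, ?_⟩
        · rw [List.length_insertIdx_of_le_length hp, hlen]; omega
        · intro x hx
          rcases List.mem_cons.1 (hperm.mem_iff.1 hx) with rfl | hx
          · simp only [Finset.mem_Icc]; omega
          · have := hmem x hx; simp only [Finset.mem_Icc] at this ⊢; omega
    · rintro ⟨hnd, hlen, hmem⟩
      by_cases hK1 : (K + 1) ∈ v
      · refine ⟨v.erase (K + 1), ⟨hnd.erase _, ?_, ?_⟩, ?_⟩
        · rw [List.length_erase_of_mem hK1, hlen]; omega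
        · intro x hx
          have hx' := (hnd.mem_erase_iff).1 hx
          have := hmem x hx'.2
          simp only [Finset.mem_Icc] at this ⊢; omega
        · obtain ⟨p, hp, hv⟩ := exists_insertIdx_erase hK1
          exact Or.inr ⟨p, hp, hv⟩
      · match v, hlen with
        | a :: t, hlen =>
          have hat : a ∈ Finset.Icc 1 (K+1) := hmem a (List.mem_cons_self (a := a) (l := t))
          have haK1 : a ≠ K + 1 := fun h => hK1 (h ▸ List.mem_cons_self (a := a) (l := t))
          refine ⟨t, ⟨(List.nodup_cons.1 hnd).2, ?_, ?_⟩, ?_⟩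
          · simp only [List.length_cons] at hlen; omega
          · intro x hx
            have := hmem x (List.mem_cons_of_mem a hx)
            have hxK1 : x ≠ K + 1 := fun h => hK1 (h ▸ List.mem_cons_of_mem a hx)
            simp only [Finset.mem_Icc] at this ⊢; omega
          · refine Or.inl ⟨a, ?_, (List.nodup_cons.1 hnd).1, rfl⟩
            simp only [Finset.mem_Icc] at hat ⊢; omega
        | [], hlen => simp at hlen; omega
end

section
/- Let K and r be integers with 2 ≤ r ≤ K−1 and fix k ∈ [K]. For each tuple i' = [i'_1 … i'_{K−1−r}] ∈ S([K]\{k},K−1−r), let U(i') ⊆ S([K],K−r) be the set consisting of the r tuples [j i'_1 … i'_{K−1−r}] for the r elements j ∈ [K] with j ≠ k and j ∉ i', together with the K−r tuples obtained from i' by inserting the element k into each of the K−r possible positions. Then |U(i')| = K for every i', the sets U(i'), i' ∈ S([K]\{k},K−1−r), are pairwise disjoint, and their union is all of S([K],K−r). -/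
open Finset

/-- For `k ∈ [K]` and a tuple `i' ∈ S([K]\{k},K-1-r)`, the set `U(i') ⊆ S([K],K-r)`
consisting of the tuples `[j i']` for the elements `j ∈ [K]` with `j ≠ k`, `j ∉ i'`,
together with the tuples obtained from `i'` by inserting the element `k` into each
possible position. -/
def Uset (K k : ℕ) (i' : List ℕ) : Set (List ℕ) :=
  {v : List ℕ | ∃ j ∈ Finset.Icc 1 K, j ≠ k ∧ j ∉ i' ∧ v = j :: i'} ∪
  {v : List ℕ | ∃ p ≤ i'.length, v = i'.insertIdx p k}

lemma idxOf_insertIdx {k : ℕ} : ∀ (p : ℕ) (l : List ℕ), k ∉ l → p ≤ l.length →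
    (l.insertIdx p k).idxOf k = p
  | 0, l, _, _ => by simp
  | p + 1, [], _, h => by simp at h
  | p + 1, a :: l, hk, h => by
    have ha : a ≠ k := by rintro rfl; exact hk (List.mem_cons_self)
    rw [List.insertIdx_succ_cons, List.idxOf_cons_ne _ ha,
      idxOf_insertIdx p l (fun h' => hk (List.mem_cons_of_mem _ h'))
        (Nat.le_of_succ_le_succ h)]

lemma erase_insertIdx {k : ℕ} : ∀ (p : ℕ) (l : List ℕ), k ∉ l → p ≤ l.length →
    (l.insertIdx p k).erase k = l
  | 0, l, _, _ => by simp
  | p + 1, [], _, h => by simp at h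
  | p + 1, a :: l, hk, h => by
    have ha : a ≠ k := by rintro rfl; exact hk (List.mem_cons_self)
    rw [List.insertIdx_succ_cons, List.erase_cons_tail (by simp [ha]),
      erase_insertIdx p l (fun h' => hk (List.mem_cons_of_mem _ h'))
        (Nat.le_of_succ_le_succ h)]

lemma insertIdx_idxOf {k : ℕ} : ∀ (v : List ℕ), k ∈ v →
    (v.erase k).insertIdx (v.idxOf k) k = v
  | a :: t, hv => by
    rcases eq_or_ne a k with rfl | ha
    · simp
    · have hkt : k ∈ t := by
        rcases List.mem_cons.1 hv with h | h
        · exact absurd h.symm ha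
        · exact h
      rw [List.idxOf_cons_ne _ ha, List.erase_cons_tail (by simp [ha]),
        List.insertIdx_succ_cons, insertIdx_idxOf t hkt]

lemma k_not_mem {K k : ℕ} {i' : List ℕ}
    (h : ∀ x ∈ i', x ∈ (Finset.Icc 1 K).erase k) : k ∉ i' :=
  fun hc => (Finset.mem_erase.1 (h k hc)).1 rfl

/-- **Subfile merging classes for node removal partition `S([K],K-r)`.**
Let `2 ≤ r ≤ K-1` and fix `k ∈ [K]`.  Then `|U(i')| = K` for every
`i' ∈ S([K]\{k},K-1-r)`, the sets `U(i')` are pairwise disjoint, and their union over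
all `i' ∈ S([K]\{k},K-1-r)` is all of `S([K],K-r)`. -/
theorem Uset_partitions (K r k : ℕ) (hr : 2 ≤ r) (hrK : r + 1 ≤ K)
    (hk : k ∈ Finset.Icc 1 K) :
    (∀ i' ∈ tupleSet ((Finset.Icc 1 K).erase k) (K - 1 - r), (Uset K k i').ncard = K) ∧
    (∀ i' ∈ tupleSet ((Finset.Icc 1 K).erase k) (K - 1 - r),
      ∀ i'' ∈ tupleSet ((Finset.Icc 1 K).erase k) (K - 1 - r),
        i' ≠ i'' → Disjoint (Uset K k i') (Uset K k i'')) ∧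
    (⋃ i' ∈ tupleSet ((Finset.Icc 1 K).erase k) (K - 1 - r), Uset K k i')
      = tupleSet (Finset.Icc 1 K) (K - r) := by
  obtain ⟨hk1, hkK⟩ := Finset.mem_Icc.mp hk
  refine ⟨?_, ?_, ?_⟩
  · -- ncard = K
    rintro i' ⟨hnd, hlen, hmem⟩
    have hki : k ∉ i' := k_not_mem hmem
    set F : Finset ℕ := ((Finset.Icc 1 K).erase k) \ i'.toFinset with hF
    have hUeq : Uset K k i' =
        ((· :: i') '' ↑F) ∪
        ((fun p => i'.insertIdx p k) '' ↑(Finset.range (i'.length + 1))) := by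
      unfold Uset
      ext v
      simp only [Set.mem_union, Set.mem_setOf_eq, Set.mem_image, Finset.mem_coe, hF,
        Finset.mem_sdiff, Finset.mem_erase, List.mem_toFinset, Finset.mem_range,
        Nat.lt_succ_iff]
      constructor
      · rintro (⟨j, hj1, hj2, hj3, rfl⟩ | ⟨p, hp, rfl⟩)
        · exact Or.inl ⟨j, ⟨⟨hj2, hj1⟩, hj3⟩, rfl⟩
        · exact Or.inr ⟨p, hp, rfl⟩
      · rintro (⟨j, ⟨⟨hj2, hj1⟩, hj3⟩, rfl⟩ | ⟨p, hp, rfl⟩)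
        · exact Or.inl ⟨j, hj1, hj2, hj3, rfl⟩
        · exact Or.inr ⟨p, hp, rfl⟩
    have hdisj : Disjoint ((· :: i') '' (↑F : Set ℕ))
        ((fun p => i'.insertIdx p k) '' ↑(Finset.range (i'.length + 1))) := by
      rw [Set.disjoint_left]
      rintro v ⟨j, hj, rfl⟩ ⟨p, hp, he⟩
      simp only [Finset.mem_coe, Finset.mem_range, Nat.lt_succ_iff] at hp
      have hkmem : k ∈ i'.insertIdx p k := (List.mem_insertIdx hp).2 (Or.inl rfl)
      beta_reduce at he
      rw [he] at hkmem
      simp only [hF, Finset.mem_coe, Finset.mem_sdiff, Finset.mem_erase] at hj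
      rcases List.mem_cons.1 hkmem with h | h
      · exact hj.1.1 h.symm
      · exact hki h
    have hA : Set.InjOn (· :: i') ↑F := fun a _ b _ h => by
      injection h
    have hB : Set.InjOn (fun p => i'.insertIdx p k) ↑(Finset.range (i'.length + 1)) := by
      intro p hp q hq h
      simp only [Finset.coe_range, Set.mem_Iio, Nat.lt_succ_iff] at hp hq
      beta_reduce at h
      have := idxOf_insertIdx p i' hki hp
      rw [h, idxOf_insertIdx q i' hki hq] at this
      exact this.symm
    have hsub : i'.toFinset ⊆ (Finset.Icc 1 K).erase k := fun x hx =>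
      hmem x (List.mem_toFinset.1 hx)
    have hcardF : F.card = r := by
      rw [hF, Finset.card_sdiff_of_subset hsub, Finset.card_erase_of_mem hk,
        List.toFinset_card_of_nodup hnd, hlen, Nat.card_Icc]
      omega
    rw [hUeq, Set.ncard_union_eq hdisj ((F.finite_toSet).image _)
        (((Finset.range (i'.length + 1)).finite_toSet).image _),
      Set.ncard_image_of_injOn hA, Set.ncard_image_of_injOn hB,
      Set.ncard_coe_finset, Set.ncard_coe_finset, hcardF, Finset.card_range, hlen]
    omega
  · -- pairwise disjoint
    rintro i' ⟨hnd, hlen, hmem⟩ i'' ⟨hnd'', hlen'', hmem''⟩ hne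
    have hki : k ∉ i' := k_not_mem hmem
    have hki'' : k ∉ i'' := k_not_mem hmem''
    rw [Set.disjoint_left]
    rintro v hv hv'
    rcases hv with ⟨j, _, hjk, hji, rfl⟩ | ⟨p, hp, rfl⟩
    · rcases hv' with ⟨j2, _, _, _, he⟩ | ⟨q, hq, he⟩
      · injection he with h1 h2
        exact hne h2
      · have hkmem : k ∈ i''.insertIdx q k := (List.mem_insertIdx hq).2 (Or.inl rfl)
        rw [← he] at hkmem
        rcases List.mem_cons.1 hkmem with h | h
        · exact hjk h.symm
        · exact hki h
    · rcases hv' with ⟨j2, _, hjk2, _, he⟩ | ⟨q, hq, he⟩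
      · have hkmem : k ∈ i'.insertIdx p k := (List.mem_insertIdx hp).2 (Or.inl rfl)
        rw [he] at hkmem
        rcases List.mem_cons.1 hkmem with h | h
        · exact hjk2 h.symm
        · exact hki'' h
      · apply hne
        have h1 := erase_insertIdx p i' hki hp
        have h2 := erase_insertIdx q i'' hki'' hq
        rw [← h1, ← h2, he]
  · -- union
    ext v
    simp only [Set.mem_iUnion, exists_prop]
    constructor
    · rintro ⟨i', ⟨hnd, hlen, hmem⟩, hv⟩
      have hki : k ∉ i' := k_not_mem hmem
      rcases hv with ⟨j, hj, hjk, hji, rfl⟩ | ⟨p, hp, rfl⟩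
      · refine ⟨List.nodup_cons.2 ⟨hji, hnd⟩, by simp [hlen]; omega, ?_⟩
        intro x hx
        rcases List.mem_cons.1 hx with rfl | h
        · exact hj
        · exact Finset.mem_of_mem_erase (hmem x h)
      · refine ⟨((List.perm_insertIdx k i' hp).nodup_iff).2 (List.nodup_cons.2 ⟨hki, hnd⟩),
          by rw [List.length_insertIdx, if_pos hp, hlen]; omega, ?_⟩
        intro x hx
        rcases (List.mem_insertIdx hp).1 hx with rfl | h
        · exact hk
        · exact Finset.mem_of_mem_erase (hmem x h)
    · rintro ⟨hnd, hlen, hmem⟩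
      by_cases hkv : k ∈ v
      · have hidx : v.idxOf k < v.length := List.idxOf_lt_length_iff.2 hkv
        have hle : v.length - 1 = (v.erase k).length := (List.length_erase_of_mem hkv).symm
        refine ⟨v.erase k, ⟨hnd.erase k, ?_, ?_⟩, Or.inr ⟨v.idxOf k, by omega,
          (insertIdx_idxOf v hkv).symm⟩⟩
        · rw [List.length_erase_of_mem hkv, hlen]; omega
        · intro x hx
          rw [hnd.mem_erase_iff] at hx
          exact Finset.mem_erase.2 ⟨hx.1, hmem x hx.2⟩
      · match v, hlen with
        | [], hlen => exact absurd hlen (by simp only [List.length_nil]; omega)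
        | j :: t, hlen =>
          have hjk : j ≠ k := fun h => hkv (h ▸ List.mem_cons_self)
          have hkt : k ∉ t := fun h => hkv (List.mem_cons_of_mem _ h)
          obtain ⟨hjt, hndt⟩ := List.nodup_cons.1 hnd
          refine ⟨t, ⟨hndt, ?_, ?_⟩, Or.inl ⟨j, hmem j (List.mem_cons_self), hjk, hjt, rfl⟩⟩
          · simp only [List.length_cons] at hlen; omega
          · intro x hx
            exact Finset.mem_erase.2 ⟨fun h => hkt (h ▸ hx), hmem x (List.mem_cons_of_mem _ hx)⟩
end

section
/- Let K and r be integers with 2 ≤ r ≤ K−1. For i ∈ S([K],K−r), let T(i) ⊆ S([K+1],K+1−r) consist of the r tuples [j i] for j ∈ [K] with j ∉ i together with the K−r+1 insertions of K+1 into i. Then for every k ∈ [K]: the union over all i ∈ S([K],K−r) with k ∉ i of the sets T(i) \ {[k i]} equals {v ∈ S([K+1],K+1−r) : k ∉ v}; and the set {[k i] : k ∈ [K], i ∈ S([K],K−r), k ∉ i} equals {v ∈ S([K+1],K+1−r) : K+1 ∉ v}. Consequently, in the node-addition rebalancing scheme applied to the database C(r,[K]) (each block W_i is split into K+1 equal parts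 indexed by T(i); each node k transmits to the new node K+1 and deletes exactly its parts indexed [k i]), every node m ∈ [K+1] ends up storing exactly the parts with indices v ∈ S([K+1],K+1−r) satisfying m ∉ v, i.e., exactly P(K,K+1−r) parts amounting to a fraction r/(K+1) of the N file bits; the resulting database is the database C(r,[K+1]); and the total number of bits transmitted is rN/(K+1). -/
open Finset

theorem insertIdx_app (a b : List ℕ) (x : ℕ) :
    (a ++ b).insertIdx a.length x = a ++ x :: b := by
  induction a with
  | nil => simp
  | cons h t ih => simp [List.insertIdx_succ_cons, ih]

def listFinset (A : Finset ℕ) : ℕ → Finset (List ℕ)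
  | 0 => {[]}
  | (l+1) => A.biUnion (fun x => (listFinset (A.erase x) l).image (x :: ·))

theorem mem_listFinset (l : ℕ) (A : Finset ℕ) (L : List ℕ) :
    L ∈ listFinset A l ↔ L.Nodup ∧ L.length = l ∧ ∀ x ∈ L, x ∈ A := by
  induction l generalizing A L with
  | zero =>
    simp only [listFinset, Finset.mem_singleton, List.length_eq_zero_iff]
    constructor
    · rintro rfl; simp
    · rintro ⟨_, rfl, _⟩; rfl
  | succ l ih =>
    simp only [listFinset, Finset.mem_biUnion, Finset.mem_image]
    constructor
    · rintro ⟨x, hx, t, ht, rfl⟩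
      rw [ih] at ht
      obtain ⟨hnd, hlen, hmem⟩ := ht
      refine ⟨List.nodup_cons.2 ⟨fun h => ?_, hnd⟩, by simp [hlen], ?_⟩
      · exact (Finset.mem_erase.1 (hmem x h)).1 rfl
      · intro y hy
        rcases List.mem_cons.1 hy with rfl | hy
        · exact hx
        · exact Finset.mem_of_mem_erase (hmem y hy)
    · rintro ⟨hnd, hlen, hmem⟩
      obtain ⟨x, t, rfl⟩ : ∃ x t, L = x :: t := by
        cases L with
        | nil => simp at hlen
        | cons x t => exact ⟨x, t, rfl⟩
      rw [List.nodup_cons] at hnd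
      refine ⟨x, hmem x (by simp), t, (ih _ _).2 ⟨hnd.2, by simpa using hlen, ?_⟩, rfl⟩
      intro y hy
      exact Finset.mem_erase.2 ⟨fun h => hnd.1 (h ▸ hy), hmem y (by simp [hy])⟩

theorem card_listFinset (l : ℕ) (A : Finset ℕ) :
    (listFinset A l).card = A.card.descFactorial l := by
  induction l generalizing A with
  | zero => simp [listFinset]
  | succ l ih =>
    rw [listFinset, Finset.card_biUnion]
    · have : ∀ x ∈ A, ((listFinset (A.erase x) l).image (x :: ·)).card
          = (A.card - 1).descFactorial l := by
        intro x hx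
        rw [Finset.card_image_of_injective _ (fun a b h => by injection h), ih,
          Finset.card_erase_of_mem hx]
      rw [Finset.sum_congr rfl this, Finset.sum_const, smul_eq_mul]
      cases hA : A.card with
      | zero => simp
      | succ m => rw [Nat.succ_descFactorial_succ, Nat.succ_sub_one]
    · intro x hx y hy hxy
      simp only [Finset.disjoint_left, Finset.mem_image]
      rintro L ⟨t, _, rfl⟩ ⟨s, _, h⟩
      injection h with h1 _
      exact hxy h1.symm

/-- **Correctness of the node-addition rebalancing scheme on `C(r,[K])`.**
Let `2 ≤ r ≤ K-1` and let `N` be divisible by `(K+1)·P(K,K-r)`, so that each of the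
`P(K,K-r)` blocks of `C(r,[K])` (of size `N/P(K,K-r)`) can be split into `K+1` equal
parts of size `N/((K+1)·P(K,K-r))`, indexed by `T(i)`.  In the scheme, each node
`k ∈ [K]` transmits to the new node `K+1` and deletes exactly its parts `[k i]`.  Then:
(1) for every `k ∈ [K]`, the union over the blocks `i ∈ S([K],K-r)` with `k ∉ i` of
`T(i)\{[k i]}` (node `k`'s part indices after rebalancing) is exactly
`{v ∈ S([K+1],K+1-r) : k ∉ v}`;
(2) the set of transmitted part indices `{[k i] : k ∈ [K], i ∈ S([K],K-r), k ∉ i}`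
(the new node's part indices) is exactly `{v ∈ S([K+1],K+1-r) : K+1 ∉ v}`;
so the resulting database is `C(r,[K+1])`;
(3) every node `m ∈ [K+1]` ends up storing exactly `P(K,K+1-r)` parts;
(4) these parts amount to `P(K,K+1-r)·N/((K+1)·P(K,K-r)) = (r/(K+1))·N` bits, which is
also the total number of bits transmitted. -/
theorem node_addition_scheme_correct (K r N : ℕ) (hr : 2 ≤ r) (hrK : r + 1 ≤ K)
    (hdvd : ((K + 1) * Nat.descFactorial K (K - r)) ∣ N) :
    (∀ k ∈ Finset.Icc 1 K,
      (⋃ i ∈ {i ∈ tupleSet (Finset.Icc 1 K) (K - r) | k ∉ i}, (Tset K i \ {k :: i}))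
        = {v ∈ tupleSet (Finset.Icc 1 (K + 1)) (K + 1 - r) | k ∉ v}) ∧
    ({v : List ℕ | ∃ k ∈ Finset.Icc 1 K, ∃ i ∈ tupleSet (Finset.Icc 1 K) (K - r),
        k ∉ i ∧ v = k :: i}
      = {v ∈ tupleSet (Finset.Icc 1 (K + 1)) (K + 1 - r) | (K + 1) ∉ v}) ∧
    (∀ m ∈ Finset.Icc 1 (K + 1),
      {v ∈ tupleSet (Finset.Icc 1 (K + 1)) (K + 1 - r) | m ∉ v}.ncard
        = Nat.descFactorial K (K + 1 - r)) ∧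
    ((Nat.descFactorial K (K + 1 - r) : ℝ)
        * ((N : ℝ) / (((K : ℝ) + 1) * (Nat.descFactorial K (K - r) : ℝ)))
      = ((r : ℝ) / ((K : ℝ) + 1)) * N) := by
  refine ⟨?_, ?_, ?_, ?_⟩
  · -- Part 1
    intro k hk
    rw [Finset.mem_Icc] at hk
    ext v
    simp only [Set.mem_iUnion, Set.mem_setOf_eq, Set.mem_diff, Set.mem_singleton_iff,
      tupleSet, Tset, Set.mem_union, exists_prop]
    constructor
    · rintro ⟨i, ⟨⟨hnd, hlen, hmem⟩, hki⟩, hvT, hvk⟩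
      rcases hvT with ⟨j, hj, hji, rfl⟩ | ⟨p, hp, rfl⟩
      · rw [Finset.mem_Icc] at hj
        refine ⟨⟨List.nodup_cons.2 ⟨hji, hnd⟩, by simp [hlen]; omega, ?_⟩, ?_⟩
        · intro x hx
          rcases List.mem_cons.1 hx with rfl | hx
          · exact Finset.mem_Icc.2 ⟨hj.1, by omega⟩
          · have := Finset.mem_Icc.1 (hmem x hx); exact Finset.mem_Icc.2 ⟨this.1, by omega⟩
        · intro hkv
          rcases List.mem_cons.1 hkv with rfl | hkv
          · exact hvk rfl
          · exact hki hkv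
      · have hK1 : (K + 1) ∉ i := fun h => by
          have := Finset.mem_Icc.1 (hmem _ h); omega
        have hab : i.take p ++ i.drop p = i := List.take_append_drop p i
        have hla : (i.take p).length = p := by
          rw [List.length_take]; omega
        have hveq : i.insertIdx p (K + 1) = i.take p ++ (K + 1) :: i.drop p := by
          calc i.insertIdx p (K + 1) = (i.take p ++ i.drop p).insertIdx (i.take p).length (K + 1) := by
                rw [hab, hla]
            _ = i.take p ++ (K + 1) :: i.drop p := insertIdx_app _ _ _
        rw [hveq]
        refine ⟨⟨List.nodup_middle.2 (List.nodup_cons.2 ⟨by rwa [hab], by rwa [hab]⟩), ?_, ?_⟩, ?_⟩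
        · have : (i.take p ++ (K + 1) :: i.drop p).length = i.length + 1 := by
            simp; omega
          rw [this, hlen]; omega
        · intro x hx
          rcases List.mem_append.1 hx with hx | hx
          · have := Finset.mem_Icc.1 (hmem x (by rw [← hab]; exact List.mem_append.2 (Or.inl hx)))
            exact Finset.mem_Icc.2 ⟨this.1, by omega⟩
          · rcases List.mem_cons.1 hx with rfl | hx
            · exact Finset.mem_Icc.2 ⟨by omega, le_rfl⟩
            · have := Finset.mem_Icc.1 (hmem x (by rw [← hab]; exact List.mem_append.2 (Or.inr hx)))
              exact Finset.mem_Icc.2 ⟨this.1, by omega⟩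
        · intro hkv
          rcases List.mem_append.1 hkv with hx | hx
          · exact hki (by rw [← hab]; exact List.mem_append.2 (Or.inl hx))
          · rcases List.mem_cons.1 hx with rfl | hx
            · omega
            · exact hki (by rw [← hab]; exact List.mem_append.2 (Or.inr hx))
    · rintro ⟨⟨hnd, hlen, hmem⟩, hkv⟩
      by_cases hKv : (K + 1) ∈ v
      · obtain ⟨a, b, rfl⟩ := List.append_of_mem hKv
        have hnd' := List.nodup_middle.1 hnd
        rw [List.nodup_cons] at hnd'
        have hlen' : (a ++ b).length = K - r := by
          simp at hlen ⊢; omega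
        have hmem' : ∀ x ∈ a ++ b, x ∈ Finset.Icc 1 K := by
          intro x hx
          have hxv : x ∈ a ++ (K + 1) :: b := by
            rcases List.mem_append.1 hx with hx | hx
            · exact List.mem_append.2 (Or.inl hx)
            · exact List.mem_append.2 (Or.inr (List.mem_cons.2 (Or.inr hx)))
          have := Finset.mem_Icc.1 (hmem x hxv)
          have hxne : x ≠ K + 1 := fun h => hnd'.1 (h ▸ hx)
          exact Finset.mem_Icc.2 ⟨this.1, by omega⟩
        have hki : k ∉ a ++ b := by
          intro hx
          apply hkv
          rcases List.mem_append.1 hx with hx | hx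
          · exact List.mem_append.2 (Or.inl hx)
          · exact List.mem_append.2 (Or.inr (List.mem_cons.2 (Or.inr hx)))
        refine ⟨a ++ b, ⟨⟨hnd'.2, hlen', hmem'⟩, hki⟩,
          Or.inr ⟨a.length, by simp, (insertIdx_app a b (K + 1)).symm⟩, ?_⟩
        intro h
        have : (K + 1) ∈ k :: (a ++ b) := h ▸ (List.mem_append.2 (Or.inr (List.mem_cons.2 (Or.inl rfl))))
        rcases List.mem_cons.1 this with h' | h'
        · omega
        · exact hnd'.1 h'
      · obtain ⟨j, i, rfl⟩ : ∃ j i, v = j :: i := by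
          cases v with
          | nil => simp at hlen; omega
          | cons j i => exact ⟨j, i, rfl⟩
        rw [List.nodup_cons] at hnd
        have hj := Finset.mem_Icc.1 (hmem j (List.mem_cons.2 (Or.inl rfl)))
        have hjne : j ≠ K + 1 := fun h => hKv (List.mem_cons.2 (Or.inl h.symm))
        have hkj : k ≠ j := fun h => hkv (List.mem_cons.2 (Or.inl h))
        refine ⟨i, ⟨⟨hnd.2, by simp at hlen; omega, ?_⟩, fun h => hkv (List.mem_cons.2 (Or.inr h))⟩,
          Or.inl ⟨j, Finset.mem_Icc.2 ⟨hj.1, by omega⟩, hnd.1, rfl⟩, ?_⟩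
        · intro x hx
          have := Finset.mem_Icc.1 (hmem x (List.mem_cons.2 (Or.inr hx)))
          have hxne : x ≠ K + 1 := fun h => hKv (List.mem_cons.2 (Or.inr (h ▸ hx)))
          exact Finset.mem_Icc.2 ⟨this.1, by omega⟩
        · intro h
          injection h with h1 _
          exact hkj h1.symm
  · -- Part 2
    ext v
    simp only [Set.mem_setOf_eq, tupleSet, exists_prop]
    constructor
    · rintro ⟨k, hk, i, ⟨hnd, hlen, hmem⟩, hki, rfl⟩
      rw [Finset.mem_Icc] at hk
      refine ⟨⟨List.nodup_cons.2 ⟨hki, hnd⟩, by simp [hlen]; omega, ?_⟩, ?_⟩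
      · intro x hx
        rcases List.mem_cons.1 hx with rfl | hx
        · exact Finset.mem_Icc.2 ⟨hk.1, by omega⟩
        · have := Finset.mem_Icc.1 (hmem x hx); exact Finset.mem_Icc.2 ⟨this.1, by omega⟩
      · intro h
        rcases List.mem_cons.1 h with h | h
        · omega
        · have := Finset.mem_Icc.1 (hmem _ h); omega
    · rintro ⟨⟨hnd, hlen, hmem⟩, hKv⟩
      obtain ⟨k, i, rfl⟩ : ∃ k i, v = k :: i := by
        cases v with
        | nil => simp at hlen; omega
        | cons k i => exact ⟨k, i, rfl⟩
      rw [List.nodup_cons] at hnd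
      have hk := Finset.mem_Icc.1 (hmem k (List.mem_cons.2 (Or.inl rfl)))
      have hkne : k ≠ K + 1 := fun h => hKv (List.mem_cons.2 (Or.inl h.symm))
      refine ⟨k, Finset.mem_Icc.2 ⟨hk.1, by omega⟩, i, ⟨hnd.2, by simp at hlen; omega, ?_⟩, hnd.1, rfl⟩
      intro x hx
      have := Finset.mem_Icc.1 (hmem x (List.mem_cons.2 (Or.inr hx)))
      have hxne : x ≠ K + 1 := fun h => hKv (List.mem_cons.2 (Or.inr (h ▸ hx)))
      exact Finset.mem_Icc.2 ⟨this.1, by omega⟩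
  · -- Part 3
    intro m hm
    have hset : {v ∈ tupleSet (Finset.Icc 1 (K + 1)) (K + 1 - r) | m ∉ v}
        = ↑(listFinset ((Finset.Icc 1 (K + 1)).erase m) (K + 1 - r)) := by
      ext v
      simp only [Set.mem_setOf_eq, tupleSet, Finset.coe_sort_coe, Finset.mem_coe,
        mem_listFinset, Finset.mem_erase]
      constructor
      · rintro ⟨⟨hnd, hlen, hmem⟩, hmv⟩
        exact ⟨hnd, hlen, fun x hx => ⟨fun h => hmv (h ▸ hx), hmem x hx⟩⟩
      · rintro ⟨hnd, hlen, hmem⟩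
        exact ⟨⟨hnd, hlen, fun x hx => (hmem x hx).2⟩, fun h => (hmem m h).1 rfl⟩
    rw [hset, Set.ncard_coe_finset, card_listFinset, Finset.card_erase_of_mem hm,
      Nat.card_Icc]
    norm_num
  · -- Part 4
    have hD : (Nat.descFactorial K (K - r)) ≠ 0 := fun h => by
      have := Nat.descFactorial_eq_zero_iff_lt.1 h; omega
    have key : Nat.descFactorial K (K + 1 - r) = r * Nat.descFactorial K (K - r) := by
      rw [show K + 1 - r = (K - r) + 1 from by omega, Nat.descFactorial_succ,
        show K - (K - r) = r from by omega]
    rw [key]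
    have hD' : (Nat.descFactorial K (K - r) : ℝ) ≠ 0 := Nat.cast_ne_zero.2 hD
    have hK1 : ((K : ℝ) + 1) ≠ 0 := by positivity
    push_cast
    field_simp
end

section
/- Let K and r be integers with 2 ≤ r ≤ K−1 and fix a removed node k ∈ [K]. Let A_k = {i ∈ S([K],K−r) : k ∉ i}, and for i' ∈ S([K]\{k},K−1−r) let U(i') ⊆ S([K],K−r) consist of the r tuples [j i'] for j ∈ [K], j ≠ k, j ∉ i', together with the K−r insertions of k into i'. Then for every surviving node m ∈ [K]\{k}: the set {i ∈ S([K],K−r) : m ∉ i} ∪ {i ∈ A_k : i_1 = m} (node m's block indices after the removal rebalancing, which delivers each block W_i with i ∈ A_k to node i_1) equals the union of the sets U(i') over all i' ∈ S([K]\{k},K−1−r) with m ∉ i'. Consequently each surviving node holds exactly K·P(K−2,K−1−r) blocks, amounting to a fraction r/(K−1) of the N file bits, and after merging the K blocks of each class U(i') into a single subfile W_{i'}, the resulting database on the K−1 surviving nodes is the database C(r,[K−1]) (node m stores W_{i'} if and only if m ∉ i'). -/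
open Finset

/-- `A_k`: the tuples `i ∈ S([K],K-r)` not containing `k` (indices of the blocks
stored at the removed node `k`). -/
def Aset (K r k : ℕ) : Set (List ℕ) :=
  {i ∈ tupleSet (Finset.Icc 1 K) (K - r) | k ∉ i}

/- ### Auxiliary lemmas -/

lemma my_insertIdx_append (s t : List ℕ) (a : ℕ) :
    (s ++ t).insertIdx s.length a = s ++ a :: t := by
  induction s with
  | nil => simp
  | cons x s ih => simpa [List.insertIdx_succ_cons] using ih

lemma my_nodup_insertIdx {l : List ℕ} {a : ℕ} (h : a ∉ l) (hn : l.Nodup) :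
    ∀ {p : ℕ}, p ≤ l.length → (l.insertIdx p a).Nodup := by
  induction l with
  | nil =>
    intro p hp
    have hp0 : p = 0 := by simpa using hp
    subst hp0
    simp
  | cons x xs ih =>
    intro p hp
    cases p with
    | zero =>
      rw [List.insertIdx_zero]
      exact List.nodup_cons.mpr ⟨h, hn⟩
    | succ q =>
      rw [List.insertIdx_succ_cons]
      rcases List.nodup_cons.mp hn with ⟨hx, hxs⟩
      have ha : a ∉ xs := fun hc => h (List.mem_cons_of_mem _ hc)
      have hq : q ≤ xs.length := by simpa using hp
      refine List.nodup_cons.mpr ⟨?_, ih ha hxs hq⟩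
      intro hc
      rcases (List.mem_insertIdx hq).mp hc with rfl | hc
      · exact h (List.mem_cons_self)
      · exact hx hc

/-- The equivalence between `tupleSet A l` and embeddings `Fin l ↪ A`. -/
noncomputable def tupleEquiv (A : Finset ℕ) (l : ℕ) : tupleSet A l ≃ (Fin l ↪ A) where
  toFun L := ⟨fun i => ⟨L.1.get (Fin.cast L.2.2.1.symm i), L.2.2.2 _ (L.1.get_mem _)⟩, by
    intro a b h
    have hinj := List.nodup_iff_injective_get.mp L.2.1
    have h2 : L.1.get (Fin.cast L.2.2.1.symm a) = L.1.get (Fin.cast L.2.2.1.symm b) :=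
      congrArg Subtype.val h
    exact Fin.cast_injective _ (hinj h2)⟩
  invFun f := ⟨List.ofFn fun i => (f i : ℕ), by
    refine ⟨List.nodup_ofFn.mpr ?_, by simp, ?_⟩
    · intro a b h
      exact f.injective (Subtype.ext h)
    · intro x hx
      rcases List.mem_ofFn.mp hx with ⟨i, rfl⟩
      exact (f i).2⟩
  left_inv L := by
    apply Subtype.ext
    apply List.ext_get (by simp [L.2.2.1])
    intro n h1 h2
    simp [List.get_ofFn]
    rfl
  right_inv f := by
    ext i
    simp [List.get_ofFn]

lemma tupleSet_finite (A : Finset ℕ) (l : ℕ) : (tupleSet A l).Finite := by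
  rw [← Set.finite_coe_iff]
  exact Finite.of_equiv _ (tupleEquiv A l).symm

lemma tupleSet_ncard (A : Finset ℕ) (l : ℕ) :
    (tupleSet A l).ncard = A.card.descFactorial l := by
  rw [← Nat.card_coe_set_eq, Nat.card_congr (tupleEquiv A l), Nat.card_eq_fintype_card,
    Fintype.card_embedding_eq, Fintype.card_coe, Fintype.card_fin]

lemma tupleSet_filter_not_mem (A : Finset ℕ) (l m : ℕ) :
    {i ∈ tupleSet A l | m ∉ i} = tupleSet (A.erase m) l := by
  ext i
  simp only [tupleSet, Set.mem_setOf_eq, Finset.mem_erase]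
  constructor
  · rintro ⟨⟨nd, len, hm⟩, hni⟩
    exact ⟨nd, len, fun x hx => ⟨fun h => hni (h ▸ hx), hm x hx⟩⟩
  · rintro ⟨nd, len, hm⟩
    exact ⟨⟨nd, len, fun x hx => (hm x hx).2⟩, fun h => (hm m h).1 rfl⟩

/-- **Correctness of the node-removal rebalancing scheme on `C(r,[K])`.**
Let `2 ≤ r ≤ K-1`, fix a removed node `k ∈ [K]`, and recall that in `C(r,[K])` the `N`
bits are split into `P(K,K-r)` equal blocks indexed by `S([K],K-r)`, node `m` storing
the blocks `i` with `m ∉ i`.  The removal rebalancing delivers each block `W_i`,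
`i ∈ A_k`, to node `i_1` (the first component of `i`).  Then for every surviving node
`m ∈ [K]\{k}`:
(1) node `m`'s block indices after rebalancing,
`{i ∈ S([K],K-r) : m ∉ i} ∪ {i ∈ A_k : i_1 = m}`, equal the union of the merging
classes `U(i')` over the `i' ∈ S([K]\{k},K-1-r)` with `m ∉ i'`, so that after merging
each class `U(i')` into a single subfile `W_{i'}` the resulting database on the `K-1`
surviving nodes is `C(r,[K-1])` (node `m` stores `W_{i'}` iff `m ∉ i'`);
(2) node `m` holds exactly `K·P(K-2,K-1-r)` blocks;
(3) these blocks amount to `K·P(K-2,K-1-r)·N/P(K,K-r) = (r/(K-1))·N` bits. -/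
theorem node_removal_scheme_correct (K r k N : ℕ) (hr : 2 ≤ r) (hrK : r + 1 ≤ K)
    (hk : k ∈ Finset.Icc 1 K) :
    (∀ m ∈ (Finset.Icc 1 K).erase k,
      ({i ∈ tupleSet (Finset.Icc 1 K) (K - r) | m ∉ i} ∪
          {i ∈ Aset K r k | i.head? = some m})
        = ⋃ i' ∈ {i' ∈ tupleSet ((Finset.Icc 1 K).erase k) (K - 1 - r) | m ∉ i'},
            Uset K k i') ∧
    (∀ m ∈ (Finset.Icc 1 K).erase k,
      ({i ∈ tupleSet (Finset.Icc 1 K) (K - r) | m ∉ i} ∪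
          {i ∈ Aset K r k | i.head? = some m}).ncard
        = K * Nat.descFactorial (K - 2) (K - 1 - r)) ∧
    (((K : ℝ) * (Nat.descFactorial (K - 2) (K - 1 - r) : ℝ))
        * ((N : ℝ) / (Nat.descFactorial K (K - r) : ℝ))
      = ((r : ℝ) / ((K : ℝ) - 1)) * N) := by
  have hK3 : 3 ≤ K := by omega
  refine ⟨?_, ?_, ?_⟩
  · -- part 1
    intro m hm
    rcases Finset.mem_erase.mp hm with ⟨hmk, hmK⟩
    ext v
    simp only [Set.mem_union, Set.mem_setOf_eq, Set.mem_iUnion]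
    constructor
    · rintro (⟨⟨hnd, hlen, hmemA⟩, hmv⟩ | ⟨⟨⟨hnd, hlen, hmemA⟩, hkv⟩, hhead⟩)
      · by_cases hkv : k ∈ v
        · obtain ⟨s, t, rfl⟩ := List.append_of_mem hkv
          rcases List.nodup_append'.mp hnd with ⟨hs, hkt, hdisj⟩
          rcases List.nodup_cons.mp hkt with ⟨hknt, ht⟩
          have hkns : k ∉ s := fun hc => hdisj hc (List.mem_cons_self)
          refine ⟨s ++ t, ⟨⟨⟨?_, ?_, ?_⟩, ?_⟩, ?_⟩⟩
          · exact List.nodup_append'.mpr ⟨hs, ht, fun a ha hat =>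
              hdisj ha (List.mem_cons_of_mem _ hat)⟩
          · simp only [List.length_append, List.length_cons] at hlen ⊢
            omega
          · intro x hx
            rcases List.mem_append.mp hx with hx | hx
            · exact Finset.mem_erase.mpr ⟨fun h => hkns (h ▸ hx),
                hmemA x (List.mem_append.mpr (Or.inl hx))⟩
            · exact Finset.mem_erase.mpr ⟨fun h => hknt (h ▸ hx),
                hmemA x (List.mem_append.mpr (Or.inr (List.mem_cons_of_mem _ hx)))⟩
          · intro hc
            rcases List.mem_append.mp hc with hc | hc
            · exact hmv (List.mem_append.mpr (Or.inl hc))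
            · exact hmv (List.mem_append.mpr (Or.inr (List.mem_cons_of_mem _ hc)))
          · right
            refine ⟨s.length, by simp, ?_⟩
            rw [my_insertIdx_append]
        · cases v with
          | nil =>
            exfalso
            simp only [List.length_nil] at hlen
            omega
          | cons j t =>
            rcases List.nodup_cons.mp hnd with ⟨hjt, ht⟩
            refine ⟨t, ⟨⟨⟨ht, ?_, ?_⟩, fun hc => hmv (List.mem_cons_of_mem _ hc)⟩, ?_⟩⟩
            · simp only [List.length_cons] at hlen
              omega
            · intro x hx
              exact Finset.mem_erase.mpr ⟨fun h => hkv (h ▸ List.mem_cons_of_mem _ hx),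
                hmemA x (List.mem_cons_of_mem _ hx)⟩
            · left
              exact ⟨j, hmemA j (List.mem_cons_self),
                fun h => hkv (h ▸ List.mem_cons_self), hjt, rfl⟩
      · cases v with
        | nil => simp at hhead
        | cons j t =>
          have hjm : j = m := by simpa using hhead
          subst hjm
          rcases List.nodup_cons.mp hnd with ⟨hjt, ht⟩
          refine ⟨t, ⟨⟨⟨ht, ?_, ?_⟩, hjt⟩, ?_⟩⟩
          · simp only [List.length_cons] at hlen
            omega
          · intro x hx
            exact Finset.mem_erase.mpr ⟨fun h => hkv (h ▸ List.mem_cons_of_mem _ hx),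
              hmemA x (List.mem_cons_of_mem _ hx)⟩
          · left
            exact ⟨j, hmemA j (List.mem_cons_self),
              fun h => hkv (h ▸ List.mem_cons_self), hjt, rfl⟩
    · rintro ⟨i', ⟨⟨⟨hnd, hlen, hmem⟩, hmi⟩, hv⟩⟩
      have hki : k ∉ i' := fun hc => (Finset.mem_erase.mp (hmem k hc)).1 rfl
      rcases hv with ⟨j, hjK, hjk, hji, rfl⟩ | ⟨p, hp, rfl⟩
      · have htup : (j :: i') ∈ tupleSet (Finset.Icc 1 K) (K - r) := by
          refine ⟨List.nodup_cons.mpr ⟨hji, hnd⟩, ?_, ?_⟩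
          · simp only [List.length_cons, hlen]
            omega
          · intro x hx
            rcases List.mem_cons.mp hx with rfl | hx
            · exact hjK
            · exact (Finset.mem_erase.mp (hmem x hx)).2
        by_cases hjm : j = m
        · subst hjm
          right
          refine ⟨⟨htup, ?_⟩, rfl⟩
          intro hc
          rcases List.mem_cons.mp hc with h | h
          · exact hjk h.symm
          · exact hki h
        · left
          refine ⟨htup, ?_⟩
          intro hc
          rcases List.mem_cons.mp hc with h | h
          · exact hjm h.symm
          · exact hmi h
      · left
        refine ⟨⟨my_nodup_insertIdx hki hnd hp, ?_, ?_⟩, ?_⟩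
        · rw [List.length_insertIdx, if_pos hp, hlen]
          omega
        · intro x hx
          rcases (List.mem_insertIdx hp).mp hx with rfl | hx
          · exact hk
          · exact (Finset.mem_erase.mp (hmem x hx)).2
        · intro hc
          rcases (List.mem_insertIdx hp).mp hc with rfl | hc
          · exact hmk rfl
          · exact hmi hc
  · -- part 2
    intro m hm
    rcases Finset.mem_erase.mp hm with ⟨hmk, hmK⟩
    have hdisj : Disjoint {i ∈ tupleSet (Finset.Icc 1 K) (K - r) | m ∉ i}
        {i ∈ Aset K r k | i.head? = some m} := by
      rw [Set.disjoint_left]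
      rintro i ⟨_, hmi⟩ ⟨_, hhead⟩
      cases i with
      | nil => simp at hhead
      | cons j t =>
        have hjm : j = m := by simpa using hhead
        exact hmi (hjm ▸ List.mem_cons_self)
    have hset2 : {i ∈ Aset K r k | i.head? = some m}
        = (List.cons m) '' tupleSet (((Finset.Icc 1 K).erase k).erase m) (K - r - 1) := by
      ext i
      constructor
      · rintro ⟨⟨⟨hnd, hlen, hmem⟩, hki⟩, hhead⟩
        cases i with
        | nil => simp at hhead
        | cons j t =>
          have hjm : j = m := by simpa using hhead
          subst hjm
          rcases List.nodup_cons.mp hnd with ⟨hmt, ht⟩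
          refine ⟨t, ⟨ht, ?_, ?_⟩, rfl⟩
          · simp only [List.length_cons] at hlen
            omega
          · intro x hx
            exact Finset.mem_erase.mpr ⟨fun h => hmt (h ▸ hx), Finset.mem_erase.mpr
              ⟨fun h => hki (h ▸ List.mem_cons_of_mem _ hx), hmem x (List.mem_cons_of_mem _ hx)⟩⟩
      · rintro ⟨t, ⟨hnd, hlen, hmem⟩, rfl⟩
        have hmt : m ∉ t := fun hc => (Finset.mem_erase.mp (hmem m hc)).1 rfl
        refine ⟨⟨⟨List.nodup_cons.mpr ⟨hmt, hnd⟩, ?_, ?_⟩, ?_⟩, rfl⟩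
        · simp only [List.length_cons, hlen]
          omega
        · intro x hx
          rcases List.mem_cons.mp hx with rfl | hx
          · exact hmK
          · exact (Finset.mem_erase.mp (Finset.mem_erase.mp (hmem x hx)).2).2
        · intro hc
          rcases List.mem_cons.mp hc with h | h
          · exact hmk h.symm
          · exact (Finset.mem_erase.mp (Finset.mem_erase.mp (hmem k h)).2).1 rfl
    have hfin1 : {i ∈ tupleSet (Finset.Icc 1 K) (K - r) | m ∉ i}.Finite :=
      (tupleSet_finite _ _).subset (fun i hi => hi.1)
    have hfin2 : {i ∈ Aset K r k | i.head? = some m}.Finite := by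
      rw [hset2]
      exact ((tupleSet_finite _ _).image _)
    rw [Set.ncard_union_eq hdisj hfin1 hfin2, tupleSet_filter_not_mem, tupleSet_ncard, hset2,
      Set.ncard_image_of_injective _ (fun a b h => List.tail_eq_of_cons_eq h), tupleSet_ncard]
    have hcard1 : ((Finset.Icc 1 K).erase m).card = K - 1 := by
      rw [Finset.card_erase_of_mem hmK, Nat.card_Icc]
      omega
    have hcard2 : (((Finset.Icc 1 K).erase k).erase m).card = K - 2 := by
      rw [Finset.card_erase_of_mem (Finset.mem_erase.mpr ⟨hmk, hmK⟩),
        Finset.card_erase_of_mem hk, Nat.card_Icc]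
      omega
    rw [hcard1, hcard2]
    obtain ⟨t, ht⟩ : ∃ t, t = K - 1 - r := ⟨_, rfl⟩
    obtain ⟨M, hM⟩ : ∃ M, M = K - 2 := ⟨_, rfl⟩
    rw [show K - r - 1 = t by omega, show K - r = t + 1 by omega, ← ht, ← hM,
      show K - 1 = M + 1 by omega, Nat.succ_descFactorial_succ, show K = M + 2 by omega]
    ring
  · -- part 3
    have hD1pos : 0 < (K - 1).descFactorial (K - 1 - r) :=
      Nat.pos_of_ne_zero (fun h =>
        absurd (Nat.descFactorial_eq_zero_iff_lt.mp h) (by omega))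
    have hkey : (K - 1) * (K - 2).descFactorial (K - 1 - r)
        = r * (K - 1).descFactorial (K - 1 - r) := by
      have h1 : (K - 1).descFactorial ((K - 1 - r) + 1)
          = (K - 1) * (K - 2).descFactorial (K - 1 - r) := by
        have h2 : K - 1 = (K - 2) + 1 := by omega
        rw [h2, Nat.succ_descFactorial_succ]
      have h3 : (K - 1).descFactorial ((K - 1 - r) + 1)
          = (K - 1 - (K - 1 - r)) * (K - 1).descFactorial (K - 1 - r) := by
        rw [Nat.descFactorial_succ]
      have h4 : K - 1 - (K - 1 - r) = r := by omega
      rw [h4] at h3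
      rw [← h1, h3]
    have hKdesc : K.descFactorial (K - r) = K * (K - 1).descFactorial (K - 1 - r) := by
      have h1 : K - r = (K - 1 - r) + 1 := by omega
      have h2 : K = (K - 1) + 1 := by omega
      rw [h1]
      conv_lhs => rw [h2]
      rw [Nat.succ_descFactorial_succ, ← h2]
    rw [hKdesc]
    have hK1 : (K : ℝ) - 1 ≠ 0 := by
      have : (3 : ℝ) ≤ K := by exact_mod_cast hK3
      linarith
    have hK0 : (K : ℝ) ≠ 0 := by positivity
    have hD1 : ((K - 1).descFactorial (K - 1 - r) : ℝ) ≠ 0 := by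
      exact_mod_cast hD1pos.ne'
    have hkeyR : ((K : ℝ) - 1) * ((K - 2).descFactorial (K - 1 - r) : ℝ)
        = (r : ℝ) * ((K - 1).descFactorial (K - 1 - r) : ℝ) := by
      have hc := congrArg (Nat.cast (R := ℝ)) hkey
      push_cast at hc
      rw [Nat.cast_sub (by omega : 1 ≤ K)] at hc
      push_cast at hc
      linarith [hc]
    field_simp
    push_cast
    linear_combination (K : ℝ) * (N : ℝ) * hkeyR
end
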